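/- arXiv:1901.05445 — 5 statements merged into one kernel-verified Lean document; each statement's English description precedes it below -/
import Mathlib

section
/- For 2 ≤ m ≤ q, g ∈ GL_2(F_q), and t ∈ F_q ∪ {∞}, the matrix g_m satisfies g_m · c_m(t) = λ · c_m(g(t)) for some nonzero scalar λ, where g(t) is the Möbius action and c_m(t) = (1,t,...,t^{m-1})^T for t ∈ F_q, c_m(∞) = (0,...,0,1)^T. -/
open Matrix Polynomial

/-- The column `c_m(t)` of the PRS generator matrix: `(1,t,...,t^{m-1})` for `t ∈ F`
(`some a`), and `(0,...,0,1)` for `t = ∞` (`none`). -/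
def PRScol (F : Type*) [Field F] (m : ℕ) : Option F → Fin m → F
  | some a => fun i => a ^ (i : ℕ)
  | none => fun i => if (i : ℕ) = m - 1 then 1 else 0

/-- The generator matrix `G_m` of the projective Reed-Solomon code, with columns
indexed by `Option F = F ∪ {∞}`. -/
def PRSmat (F : Type*) [Field F] (m : ℕ) : Matrix (Fin m) (Option F) F :=
  Matrix.of fun i t => PRScol F m t i

/-- The projective Reed-Solomon code `PRS(m)`: the row span of `G_m`. -/
def PRS (F : Type*) [Field F] (m : ℕ) : Submodule F (Option F → F) :=
  Submodule.span F (Set.range (PRSmat F m))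

/-- Error distance of a word `u` to a set of codewords `C`. -/
noncomputable def errDist {F ι : Type*} [DecidableEq F] [Fintype ι]
    (u : ι → F) (C : Set (ι → F)) : ℕ :=
  sInf {d | ∃ c ∈ C, hammingDist u c = d}

/-- Covering radius of a set of codewords `C`. -/
noncomputable def covRad {F ι : Type*} [DecidableEq F] [Fintype ι]
    (C : Set (ι → F)) : ℕ :=
  sSup {r | ∃ u : ι → F, errDist u C = r}

/-- Minimum distance of a code `C`. -/
noncomputable def minDist {F ι : Type*} [DecidableEq F] [Fintype ι]
    (C : Set (ι → F)) : ℕ :=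
  sInf {d | ∃ x ∈ C, ∃ y ∈ C, x ≠ y ∧ hammingDist x y = d}

/-- The matrix `g_m` associated to a 2×2 matrix `g = [[a,b],[c,d]]`: its `(i,j)` entry
(0-indexed) is the coefficient of `X^j` in `(a+bX)^{m-1-i} (c+dX)^i`. -/
noncomputable def glift (F : Type*) [Field F] (m : ℕ) (g : Matrix (Fin 2) (Fin 2) F) :
    Matrix (Fin m) (Fin m) F :=
  Matrix.of fun i j =>
    ((Polynomial.C (g 0 0) + Polynomial.C (g 0 1) * Polynomial.X) ^ (m - 1 - (i : ℕ)) *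
      (Polynomial.C (g 1 0) + Polynomial.C (g 1 1) * Polynomial.X) ^ (i : ℕ)).coeff (j : ℕ)

/-- The Möbius action of `g = [[a,b],[c,d]]` on `F ∪ {∞}`: `t ↦ (c+dt)/(a+bt)`. -/
def mobius {F : Type*} [Field F] [DecidableEq F]
    (g : Matrix (Fin 2) (Fin 2) F) : Option F → Option F
  | some x =>
      if g 0 0 + g 0 1 * x = 0 then none
      else some ((g 1 0 + g 1 1 * x) / (g 0 0 + g 0 1 * x))
  | none => if g 0 1 = 0 then none else some (g 1 1 / g 0 1)

/-- The point `N_m = (0,...,0,1,0)` (1 in position `m-1` of `1..m`, i.e. index `m-2`). -/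
def Nvec (F : Type*) [Field F] (m : ℕ) : Fin m → F :=
  fun i => if (i : ℕ) = m - 2 then 1 else 0

lemma pow_helper {F : Type*} [Field F] (w z : F) (hw : w ≠ 0) (n i : ℕ) (hi : i ≤ n) :
    w ^ (n - i) * z ^ i = w ^ n * (z / w) ^ i := by
  have : w ^ n = w ^ (n - i) * w ^ i := by rw [← pow_add, Nat.sub_add_cancel hi]
  rw [this, div_pow, mul_assoc, mul_div_cancel₀ _ (pow_ne_zero _ hw)]

lemma nd_lin {F : Type*} [Field F] (a b : F) : (C a + C b * X).natDegree ≤ 1 := by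
  compute_degree

lemma nd_prod {F : Type*} [Field F] (a b c d : F) (k i : ℕ) :
    ((C a + C b * X) ^ k * (C c + C d * X) ^ i).natDegree ≤ k + i := by
  refine natDegree_mul_le.trans (add_le_add ?_ ?_) <;> refine natDegree_pow_le.trans ?_
  · simpa using Nat.mul_le_mul_left k (nd_lin a b)
  · simpa using Nat.mul_le_mul_left i (nd_lin c d)

lemma coeff_top {F : Type*} [Field F] (a b c d : F) (k i : ℕ) :
    ((C a + C b * X) ^ k * (C c + C d * X) ^ i).coeff (k + i) = b ^ k * d ^ i := by
  rw [coeff_mul_add_eq_of_natDegree_le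
      (natDegree_pow_le.trans (by simpa using Nat.mul_le_mul_left k (nd_lin a b)))
      (natDegree_pow_le.trans (by simpa using Nat.mul_le_mul_left i (nd_lin c d)))]
  have h1 : ((C a + C b * X) ^ k).coeff k = b ^ k := by
    have := coeff_pow_of_natDegree_le (p := C a + C b * X) (n := 1) (m := k) (nd_lin a b)
    simpa using this
  have h2 : ((C c + C d * X) ^ i).coeff i = d ^ i := by
    have := coeff_pow_of_natDegree_le (p := C c + C d * X) (n := 1) (m := i) (nd_lin c d)
    simpa using this
  rw [h1, h2]


lemma main_aux (F : Type*) [Field F] [DecidableEq F] (m : ℕ) (h2 : 2 ≤ m)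
    (a b c d : F) (hdet : a * d - b * c ≠ 0) (t : Option F) :
    ∃ lam : F, lam ≠ 0 ∧
      (glift F m !![a, b; c, d]).mulVec (PRScol F m t) =
        lam • PRScol F m (mobius !![a, b; c, d] t) := by
  have hM : ∀ i j, glift F m !![a, b; c, d] i j =
      ((C a + C b * X) ^ (m - 1 - (i : ℕ)) * (C c + C d * X) ^ (i : ℕ)).coeff (j : ℕ) := by
    intro i j; simp [glift]
  match t with
  | some x =>
    have heval : ∀ i : Fin m, (glift F m !![a, b; c, d]).mulVec (PRScol F m (some x)) i =
        (a + b * x) ^ (m - 1 - (i : ℕ)) * (c + d * x) ^ (i : ℕ) := by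
      intro i
      have hdeg : ((C a + C b * X) ^ (m - 1 - (i : ℕ)) * (C c + C d * X) ^ (i : ℕ)).natDegree
          < m := lt_of_le_of_lt (nd_prod a b c d _ _) (by omega)
      have : (glift F m !![a, b; c, d]).mulVec (PRScol F m (some x)) i =
          ∑ j ∈ Finset.range m,
            ((C a + C b * X) ^ (m - 1 - (i : ℕ)) * (C c + C d * X) ^ (i : ℕ)).coeff j * x ^ j := by
        rw [Matrix.mulVec, dotProduct, ← Fin.sum_univ_eq_sum_range]
        exact Finset.sum_congr rfl fun j _ => by rw [hM]; rfl
      rw [this, ← eval_eq_sum_range' hdeg x]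
      simp
    by_cases h : a + b * x = 0
    · have hc : c + d * x ≠ 0 := by
        intro hc; exact hdet (by linear_combination d * h - b * hc)
      refine ⟨(c + d * x) ^ (m - 1), pow_ne_zero _ hc, ?_⟩
      funext i
      rw [Matrix.mulVec, ← Matrix.mulVec, heval i]
      have hmob : mobius !![a, b; c, d] (some x) = none := by simp [mobius, h]
      rw [hmob]
      simp only [Pi.smul_apply, smul_eq_mul, PRScol]
      by_cases hi : (i : ℕ) = m - 1
      · rw [h, hi, Nat.sub_self, pow_zero, one_mul, if_pos rfl, mul_one]
      · have : m - 1 - (i : ℕ) ≠ 0 := by have := i.2; omega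
        rw [h, zero_pow this, zero_mul, if_neg hi, mul_zero]
    · refine ⟨(a + b * x) ^ (m - 1), pow_ne_zero _ h, ?_⟩
      funext i
      rw [Matrix.mulVec, ← Matrix.mulVec, heval i]
      have hmob : mobius !![a, b; c, d] (some x) = some ((c + d * x) / (a + b * x)) := by
        simp [mobius, h]
      rw [hmob]
      simp only [Pi.smul_apply, smul_eq_mul, PRScol]
      exact pow_helper _ _ h (m - 1) i (by have := i.2; omega)
  | none =>
    have hcoeff : ∀ i : Fin m, (glift F m !![a, b; c, d]).mulVec (PRScol F m none) i =
        b ^ (m - 1 - (i : ℕ)) * d ^ (i : ℕ) := by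
      intro i
      have h1 : (glift F m !![a, b; c, d]).mulVec (PRScol F m none) i =
          ((C a + C b * X) ^ (m - 1 - (i : ℕ)) * (C c + C d * X) ^ (i : ℕ)).coeff (m - 1) := by
        rw [Matrix.mulVec, dotProduct,
          Finset.sum_eq_single (⟨m - 1, by omega⟩ : Fin m)]
        · rw [hM]; simp [PRScol]
        · intro j _ hj
          have hj' : (j : ℕ) ≠ m - 1 := fun hh => hj (Fin.ext hh)
          simp [PRScol, hj']
        · simp
      rw [h1]
      have hsum : m - 1 = (m - 1 - (i : ℕ)) + (i : ℕ) := by have := i.2; omega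
      have hc := coeff_top a b c d (m - 1 - (i : ℕ)) i
      rw [← hsum] at hc
      rw [hc]
    by_cases hb : b = 0
    · have hd : d ≠ 0 := by intro h0; exact hdet (by rw [hb, h0]; ring)
      refine ⟨d ^ (m - 1), pow_ne_zero _ hd, ?_⟩
      funext i
      rw [Matrix.mulVec, ← Matrix.mulVec, hcoeff i]
      have hmob : mobius !![a, b; c, d] none = none := by simp [mobius, hb]
      rw [hmob]
      simp only [Pi.smul_apply, smul_eq_mul, PRScol]
      by_cases hi : (i : ℕ) = m - 1
      · rw [hb, hi, Nat.sub_self, pow_zero, one_mul, if_pos rfl, mul_one]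
      · have : m - 1 - (i : ℕ) ≠ 0 := by have := i.2; omega
        rw [hb, zero_pow this, zero_mul, if_neg hi, mul_zero]
    · refine ⟨b ^ (m - 1), pow_ne_zero _ hb, ?_⟩
      funext i
      rw [Matrix.mulVec, ← Matrix.mulVec, hcoeff i]
      have hmob : mobius !![a, b; c, d] none = some (d / b) := by simp [mobius, hb]
      rw [hmob]
      simp only [Pi.smul_apply, smul_eq_mul, PRScol]
      exact pow_helper _ _ hb (m - 1) i (by have := i.2; omega)

/-- For $g ∈ GL_2(F_q)$ and $t ∈ F_q ∪ {∞}$: $g_m c_m(t) = λ c_m(g(t))$ for some $λ ≠ 0$. -/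
theorem stmt12 (F : Type*) [Field F] [Fintype F] [DecidableEq F] (m : ℕ)
    (h2 : 2 ≤ m) (hm : m ≤ Fintype.card F)
    (g : Matrix.GeneralLinearGroup (Fin 2) F) (t : Option F) :
    ∃ lam : F, lam ≠ 0 ∧
      (glift F m (g : Matrix (Fin 2) (Fin 2) F)).mulVec (PRScol F m t) =
        lam • PRScol F m (mobius (g : Matrix (Fin 2) (Fin 2) F) t) := by
  set M := (g : Matrix (Fin 2) (Fin 2) F) with hMdef
  have hdet : M 0 0 * M 1 1 - M 0 1 * M 1 0 ≠ 0 := by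
    have hu : IsUnit M.det := (Matrix.isUnit_iff_isUnit_det _).1 g.isUnit
    rw [Matrix.det_fin_two] at hu
    exact hu.ne_zero
  have hMeta : M = !![M 0 0, M 0 1; M 1 0, M 1 1] := by
    ext i j; fin_cases i <;> fin_cases j <;> rfl
  rw [hMeta]
  exact main_aux F m h2 _ _ _ _ hdet t
end

section
/- Let 3 ≤ m ≤ q with m ≢ 1 mod p (p the characteristic of F_q) and m > 3. Then the stabilizer in PGL_2(F_q) of the point N_m = (0:...:0:1:0) ∈ P^{m-1}(F_q) under the action g · N_m := g_m N_m is the group of maps {t ↦ dt : d ∈ F_q^×}, and the orbit of N_m has size q(q+1). -/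
open Matrix Polynomial

section AuxStmt14
variable {F : Type*} [Field F]


lemma lin_ne_zero {a b : F} (h : ¬(a = 0 ∧ b = 0)) :
    (C a + C b * X : F[X]) ≠ 0 := by
  intro hz
  refine h ⟨?_, ?_⟩
  · have := congrArg (fun p => Polynomial.coeff p 0) hz; simpa using this
  · have := congrArg (fun p => Polynomial.coeff p 1) hz; simpa using this

lemma glift_key (m : ℕ) (hm : 1 ≤ m) (i : ℕ) (hi : i ≤ m - 1)
    (a b c d a' b' c' d' : F) (hA' : ¬(a' = 0 ∧ b' = 0)) :
    ∑ k ∈ Finset.range m,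
      C (((C a + C b * X) ^ (m - 1 - i) * (C c + C d * X) ^ i).coeff k) *
        (C a' + C b' * X) ^ (m - 1 - k) * (C c' + C d' * X) ^ k
      = (C (a * a' + b * c') + C (a * b' + b * d') * X) ^ (m - 1 - i) *
        (C (c * a' + d * c') + C (c * b' + d * d') * X) ^ i := by
  apply RatFunc.algebraMap_injective F
  set ι := algebraMap F[X] (RatFunc F) with hι
  have hαpoly : (C a' + C b' * X : F[X]) ≠ 0 := lin_ne_zero hA'
  set α : RatFunc F := ι (C a' + C b' * X) with hα
  set β : RatFunc F := ι (C c' + C d' * X) with hβ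
  have hα0 : α ≠ 0 := by
    rw [hα, ← _root_.map_zero ι]
    exact fun h => hαpoly (RatFunc.algebraMap_injective F h)
  set P : F[X] := (C a + C b * X) ^ (m - 1 - i) * (C c + C d * X) ^ i with hP
  have hdeg : P.natDegree < m := by
    have h1 : (C a + C b * X : F[X]).natDegree ≤ 1 := by
      apply (Polynomial.natDegree_add_le _ _).trans
      simp [Polynomial.natDegree_C_mul_le]
      exact (Polynomial.natDegree_mul_le).trans (by simp)
    have h2 : (C c + C d * X : F[X]).natDegree ≤ 1 := by
      apply (Polynomial.natDegree_add_le _ _).trans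
      simp
      exact (Polynomial.natDegree_mul_le).trans (by simp)
    have := Polynomial.natDegree_mul_le (p := (C a + C b * X : F[X]) ^ (m-1-i)) (q := (C c + C d * X : F[X]) ^ i)
    have e1 := (Polynomial.natDegree_pow_le (p := (C a + C b * X : F[X])) (n := m-1-i)).trans
      (Nat.mul_le_mul_left _ h1)
    have e2 := (Polynomial.natDegree_pow_le (p := (C c + C d * X : F[X])) (n := i)).trans
      (Nat.mul_le_mul_left _ h2)
    rw [hP]
    omega
  -- push ι inside
  rw [_root_.map_sum, _root_.map_mul, _root_.map_pow, _root_.map_pow]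
  have step1 : ∀ k ∈ Finset.range m,
      ι (C (P.coeff k) * (C a' + C b' * X) ^ (m - 1 - k) * (C c' + C d' * X) ^ k)
      = algebraMap F (RatFunc F) (P.coeff k) * α ^ (m - 1) * (β / α) ^ k := by
    intro k hk
    rw [Finset.mem_range] at hk
    rw [_root_.map_mul, _root_.map_mul, _root_.map_pow, _root_.map_pow, ← hα, ← hβ, RatFunc.algebraMap_C]
    have : α ^ (m - 1 - k) = α ^ (m - 1) / α ^ k := by
      rw [eq_div_iff (pow_ne_zero _ hα0), ← pow_add]
      congr 1
      omega
    rw [this, div_pow]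
    field_simp
    rw [RatFunc.algebraMap_eq_C]; ring
  rw [Finset.sum_congr rfl step1]
  have step2 : ∑ k ∈ Finset.range m,
      algebraMap F (RatFunc F) (P.coeff k) * α ^ (m - 1) * (β / α) ^ k
      = α ^ (m - 1) * Polynomial.eval₂ (algebraMap F (RatFunc F)) (β / α) P := by
    rw [Polynomial.eval₂_eq_sum_range' _ hdeg, Finset.mul_sum]
    exact Finset.sum_congr rfl fun k _ => by ring
  rw [step2, hP]
  simp only [Polynomial.eval₂_mul, Polynomial.eval₂_pow, Polynomial.eval₂_add,
    Polynomial.eval₂_C, Polynomial.eval₂_mul, Polynomial.eval₂_X]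
  have hsplit : α ^ (m - 1) = α ^ (m - 1 - i) * α ^ i := by
    rw [← pow_add]; congr 1; omega
  rw [hsplit, mul_mul_mul_comm, ← mul_pow, ← mul_pow]
  have e1 : α * (algebraMap F (RatFunc F) a + algebraMap F (RatFunc F) b * (β / α))
      = algebraMap F (RatFunc F) a * α + algebraMap F (RatFunc F) b * β := by
    field_simp
  have e2 : α * (algebraMap F (RatFunc F) c + algebraMap F (RatFunc F) d * (β / α))
      = algebraMap F (RatFunc F) c * α + algebraMap F (RatFunc F) d * β := by
    field_simp
  rw [e1, e2, hα, hβ]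
  simp only [hι, _root_.map_add, _root_.map_mul, RatFunc.algebraMap_C, RatFunc.algebraMap_X, RatFunc.algebraMap_eq_C]
  ring



lemma glift_mul (m : ℕ) (hm : 1 ≤ m) (g h : Matrix (Fin 2) (Fin 2) F)
    (hh : ¬(h 0 0 = 0 ∧ h 0 1 = 0)) :
    glift F m (g * h) = glift F m g * glift F m h := by
  ext i j
  rw [Matrix.mul_apply]
  simp only [glift, Matrix.of_apply, Matrix.mul_apply, Fin.sum_univ_two]
  have hrhs : ∑ k : Fin m,
      ((C (g 0 0) + C (g 0 1) * X) ^ (m - 1 - (i:ℕ)) * (C (g 1 0) + C (g 1 1) * X) ^ (i:ℕ)).coeff (k:ℕ) *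
        ((C (h 0 0) + C (h 0 1) * X) ^ (m - 1 - (k:ℕ)) * (C (h 1 0) + C (h 1 1) * X) ^ (k:ℕ)).coeff (j:ℕ)
      = (∑ k ∈ Finset.range m,
          C (((C (g 0 0) + C (g 0 1) * X) ^ (m - 1 - (i:ℕ)) * (C (g 1 0) + C (g 1 1) * X) ^ (i:ℕ)).coeff k) *
            (C (h 0 0) + C (h 0 1) * X) ^ (m - 1 - k) * (C (h 1 0) + C (h 1 1) * X) ^ k).coeff (j:ℕ) := by
    rw [Polynomial.finset_sum_coeff, ← Fin.sum_univ_eq_sum_range]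
    exact Finset.sum_congr rfl fun k _ => by
      rw [mul_assoc, Polynomial.coeff_C_mul]
  rw [hrhs, glift_key m hm (i:ℕ) (by omega) _ _ _ _ _ _ _ _ hh]

lemma glift_one (m : ℕ) : glift F m (1 : Matrix (Fin 2) (Fin 2) F) = 1 := by
  ext i j
  simp only [glift, Matrix.of_apply, Matrix.one_apply]
  norm_num
  simp [Polynomial.coeff_X_pow, Fin.ext_iff, eq_comm]

lemma coeff_lin_pow (x y : F) (n : ℕ) (hn : 1 ≤ n) :
    ((C x + C y * X : F[X]) ^ n).coeff (n - 1) = n * x * y ^ (n - 1) := by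
  rw [add_pow, Polynomial.finset_sum_coeff]
  have hterm : ∀ k, (((C x : F[X])^k * (C y * X)^(n-k) * (n.choose k : F[X]))).coeff (n-1)
      = if n - 1 = n - k then x^k * y^(n-k) * (n.choose k : F) else 0 := by
    intro k
    have e : (C x : F[X])^k * (C y * X)^(n-k) * (n.choose k : F[X])
        = C (x^k * y^(n-k) * ((n.choose k : ℕ) : F)) * X^(n-k) := by
      rw [_root_.map_mul, _root_.map_mul, C_pow, C_pow, Polynomial.C_eq_natCast, mul_pow]; ring
    rw [e, Polynomial.coeff_C_mul, Polynomial.coeff_X_pow, mul_ite, mul_one, mul_zero]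
  rw [Finset.sum_congr rfl (fun k _ => hterm k), Finset.sum_eq_single 1]
  · rw [if_pos rfl]
    simp [Nat.choose_one_right]
    ring
  · intro k hk hk1
    rw [Finset.mem_range] at hk
    rw [if_neg (by omega)]
  · intro h1
    exact absurd (Finset.mem_range.mpr (by omega)) h1

lemma mulVec_N (m : ℕ) (hm : 3 ≤ m) (g : Matrix (Fin 2) (Fin 2) F) (i : Fin m) :
    (glift F m g).mulVec (Nvec F m) i
      = ((C (g 0 0) + C (g 0 1) * X) ^ (m - 1 - (i:ℕ)) *
          (C (g 1 0) + C (g 1 1) * X) ^ (i:ℕ)).coeff (m - 2) := by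
  simp only [Matrix.mulVec, dotProduct, glift, Matrix.of_apply, Nvec,
    mul_ite, mul_one, mul_zero]
  rw [Finset.sum_eq_single (⟨m - 2, by omega⟩ : Fin m)]
  · rw [if_pos rfl]
  · intro k _ hk
    rw [if_neg (fun h => hk (Fin.ext h))]
  · intro h1
    exact absurd (Finset.mem_univ _) h1

lemma stab_iff (m : ℕ) (hm3 : 3 < m) (hchar : (m : F) ≠ 1) (g : GL (Fin 2) F) :
    (∃ lam : F, lam ≠ 0 ∧
        (glift F m (g : Matrix (Fin 2) (Fin 2) F)).mulVec (Nvec F m) = lam • Nvec F m) ↔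
    (∃ a d : F, a ≠ 0 ∧ d ≠ 0 ∧ (g : Matrix (Fin 2) (Fin 2) F) = !![a, 0; 0, d]) := by
  have hdet : ((g : Matrix (Fin 2) (Fin 2) F) 0 0) * ((g : Matrix (Fin 2) (Fin 2) F) 1 1)
      - ((g : Matrix (Fin 2) (Fin 2) F) 0 1) * ((g : Matrix (Fin 2) (Fin 2) F) 1 0) ≠ 0 := by
    rw [← Matrix.det_fin_two]
    exact ((Matrix.isUnit_iff_isUnit_det _).mp g.isUnit).ne_zero
  set a := (g : Matrix (Fin 2) (Fin 2) F) 0 0 with ha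
  set b := (g : Matrix (Fin 2) (Fin 2) F) 0 1 with hb
  set c := (g : Matrix (Fin 2) (Fin 2) F) 1 0 with hc
  set d := (g : Matrix (Fin 2) (Fin 2) F) 1 1 with hd
  have hm1 : ((m - 1 : ℕ) : F) ≠ 0 := by
    rw [Nat.cast_sub (by omega), Nat.cast_one]
    exact sub_ne_zero.mpr hchar
  constructor
  · rintro ⟨lam, hlam, heq⟩
    have E : ∀ i : Fin m,
        ((C a + C b * X) ^ (m - 1 - (i:ℕ)) * (C c + C d * X) ^ (i:ℕ)).coeff (m - 2)
          = if (i:ℕ) = m - 2 then lam else 0 := by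
      intro i
      have := congrFun heq i
      rw [mulVec_N m (by omega)] at this
      rw [this]
      simp [Nvec, Pi.smul_apply, mul_ite]
    -- from i = 0 : (m-1) * a * b^(m-2) = 0
    have E0 := E ⟨0, by omega⟩
    rw [if_neg (by simp; omega)] at E0
    simp only [Fin.val_mk, Nat.sub_zero, pow_zero, mul_one] at E0
    rw [show m - 2 = m - 1 - 1 from by omega, coeff_lin_pow a b (m-1) (by omega),
      show m - 1 - 1 = m - 2 by omega] at E0
    have hab : a = 0 ∨ b = 0 := by
      rcases mul_eq_zero.mp E0 with h | h
      · rcases mul_eq_zero.mp h with h' | h'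
        · exact absurd h' hm1
        · exact Or.inl h'
      · exact Or.inr (pow_eq_zero_iff (by omega) |>.mp h)
    rcases hab with ha0 | hb0
    · -- a = 0; then b ≠ 0, and index i = 1 gives b^(m-2) * c = 0, so c = 0, det = 0
      exfalso
      have hbne : b ≠ 0 := by
        intro hb0
        apply hdet
        rw [ha0, hb0]; ring
      have E1 := E ⟨1, by omega⟩
      rw [if_neg (by simp; omega)] at E1
      simp only [Fin.val_mk] at E1
      rw [ha0, _root_.map_zero, zero_add] at E1
      have e : ((C b * X : F[X]) ^ (m - 1 - 1) * (C c + C d * X) ^ 1)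
          = C (b ^ (m-2)) * C c * X ^ (m-2) + C (b ^ (m-2)) * C d * X ^ (m-1) := by
        rw [pow_one, mul_pow, ← C_pow, show m - 1 - 1 = m - 2 by omega,
          show m - 1 = m - 2 + 1 by omega]
        ring
      rw [e] at E1
      simp only [Polynomial.coeff_add, mul_assoc, Polynomial.coeff_C_mul,
        Polynomial.coeff_X_pow] at E1
      rw [if_pos trivial, if_neg (show ¬ (m - 2 = m - 1) by omega)] at E1
      simp only [mul_one, mul_zero, add_zero] at E1
      have hc0 : c = 0 := by
        rcases mul_eq_zero.mp E1 with h | h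
        · exact absurd h (pow_ne_zero _ hbne)
        · exact h
      apply hdet
      rw [ha0, hc0]; ring
    · -- b = 0; then a ≠ 0, d ≠ 0; index i = m-1 gives (m-1) c d^(m-2) = 0, so c = 0
      have hane : a ≠ 0 := by
        intro ha0; apply hdet; rw [ha0, hb0]; ring
      have hdne : d ≠ 0 := by
        intro hd0; apply hdet; rw [hb0, hd0]; ring
      have E2 := E ⟨m - 1, by omega⟩
      rw [if_neg (by simp; omega)] at E2
      simp only [Fin.val_mk, Nat.sub_self, pow_zero, one_mul] at E2
      rw [show m - 2 = m - 1 - 1 from by omega, coeff_lin_pow c d (m-1) (by omega),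
        show m - 1 - 1 = m - 2 by omega] at E2
      have hc0 : c = 0 := by
        rcases mul_eq_zero.mp E2 with h | h
        · rcases mul_eq_zero.mp h with h' | h'
          · exact absurd h' hm1
          · exact h'
        · exact absurd h (pow_ne_zero _ hdne)
      refine ⟨a, d, hane, hdne, ?_⟩
      ext i j
      fin_cases i <;> fin_cases j <;>
        simp [← ha, ← hb, ← hc, ← hd, hb0, hc0]
  · rintro ⟨a', d', ha', hd', hmat⟩
    refine ⟨a' * d' ^ (m - 2), mul_ne_zero ha' (pow_ne_zero _ hd'), ?_⟩
    funext i
    rw [mulVec_N m (by omega)]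
    rw [hmat]
    rw [show ((!![a', 0; 0, d'] : Matrix (Fin 2) (Fin 2) F) 0 0) = a' by simp,
      show ((!![a', 0; 0, d'] : Matrix (Fin 2) (Fin 2) F) 0 1) = 0 by simp,
      show ((!![a', 0; 0, d'] : Matrix (Fin 2) (Fin 2) F) 1 0) = 0 by simp,
      show ((!![a', 0; 0, d'] : Matrix (Fin 2) (Fin 2) F) 1 1) = d' by simp]
    rw [_root_.map_zero, zero_mul, add_zero, zero_add]
    have e : (C a' : F[X])^(m-1-(i:ℕ)) * (C d' * X)^(i:ℕ)
        = C (a'^(m-1-(i:ℕ)) * d'^(i:ℕ)) * X^(i:ℕ) := by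
      rw [mul_pow, ← C_pow, ← C_pow, _root_.map_mul]; ring
    rw [e, Polynomial.coeff_C_mul, Polynomial.coeff_X_pow]
    simp only [Nvec, Pi.smul_apply, smul_eq_mul, mul_ite, mul_one, mul_zero]
    by_cases hi : (i:ℕ) = m - 2
    · rw [if_pos hi.symm, if_pos hi, hi, show m - 1 - (m - 2) = 1 by omega, pow_one]
    · rw [if_neg (fun h => hi h.symm), if_neg hi]

lemma row0_ne (g : GL (Fin 2) F) :
    ¬((g : Matrix (Fin 2) (Fin 2) F) 0 0 = 0 ∧ (g : Matrix (Fin 2) (Fin 2) F) 0 1 = 0) := by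
  rintro ⟨h1, h2⟩
  apply ((Matrix.isUnit_iff_isUnit_det _).mp g.isUnit).ne_zero
  rw [Matrix.det_fin_two, h1, h2]
  ring

lemma glift_coe_mul (m : ℕ) (hm : 1 ≤ m) (g h : GL (Fin 2) F) :
    glift F m ((g * h : GL (Fin 2) F) : Matrix (Fin 2) (Fin 2) F)
      = glift F m (g : Matrix (Fin 2) (Fin 2) F) * glift F m (h : Matrix (Fin 2) (Fin 2) F) := by
  rw [Units.val_mul]
  exact glift_mul m hm _ _ (row0_ne h)

lemma glift_mulVec_coe_mul (m : ℕ) (hm : 1 ≤ m) (g h : GL (Fin 2) F) (v : Fin m → F) :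
    (glift F m ((g * h : GL (Fin 2) F) : Matrix (Fin 2) (Fin 2) F)).mulVec v
      = (glift F m (g : Matrix (Fin 2) (Fin 2) F)).mulVec
          ((glift F m (h : Matrix (Fin 2) (Fin 2) F)).mulVec v) := by
  rw [glift_coe_mul m hm, Matrix.mulVec_mulVec]

lemma glift_inv_cancel (m : ℕ) (hm : 1 ≤ m) (g : GL (Fin 2) F) (v : Fin m → F) :
    (glift F m ((g⁻¹ : GL (Fin 2) F) : Matrix (Fin 2) (Fin 2) F)).mulVec
      ((glift F m (g : Matrix (Fin 2) (Fin 2) F)).mulVec v) = v := by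
  rw [← glift_mulVec_coe_mul m hm, inv_mul_cancel, Units.val_one, glift_one, Matrix.one_mulVec]

lemma Nvec_ne_zero (m : ℕ) (hm : 2 ≤ m) : Nvec F m ≠ 0 := by
  intro h
  have := congrFun h ⟨m - 2, by omega⟩
  simp [Nvec] at this

lemma glift_mulVec_ne_zero (m : ℕ) (hm : 2 ≤ m) (g : GL (Fin 2) F) :
    (glift F m (g : Matrix (Fin 2) (Fin 2) F)).mulVec (Nvec F m) ≠ 0 := by
  intro h0
  refine Nvec_ne_zero (F := F) m hm ?_
  rw [← glift_inv_cancel m (by omega) g (Nvec F m), h0, Matrix.mulVec_zero]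

lemma orbit_card [Fintype F] [DecidableEq F] (m : ℕ) (hm3 : 3 < m) (hchar : (m : F) ≠ 1) :
    Set.ncard {y : Projectivization F (Fin m → F) |
        ∃ g : Matrix.GeneralLinearGroup (Fin 2) F,
          ∃ hw : (glift F m (g : Matrix (Fin 2) (Fin 2) F)).mulVec (Nvec F m) ≠ 0,
            y = Projectivization.mk F
              ((glift F m (g : Matrix (Fin 2) (Fin 2) F)).mulVec (Nvec F m)) hw} =
      Fintype.card F * (Fintype.card F + 1) := by
  classical
  have hm1 : 1 ≤ m := by omega
  set f : GL (Fin 2) F → Projectivization F (Fin m → F) :=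
    fun g => Projectivization.mk F ((glift F m (g : Matrix (Fin 2) (Fin 2) F)).mulVec (Nvec F m))
      (glift_mulVec_ne_zero m (by omega) g) with hf
  set D : Subgroup (GL (Fin 2) F) :=
    { carrier := {g : GL (Fin 2) F | ∃ lam : F, lam ≠ 0 ∧
        (glift F m (g : Matrix (Fin 2) (Fin 2) F)).mulVec (Nvec F m) = lam • Nvec F m}
      one_mem' := ⟨1, one_ne_zero, by
        rw [Units.val_one, glift_one, Matrix.one_mulVec, one_smul]⟩
      mul_mem' := by
        rintro a b ⟨la, hla, ea⟩ ⟨lb, hlb, eb⟩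
        exact ⟨lb * la, mul_ne_zero hlb hla, by
          rw [glift_mulVec_coe_mul m hm1, eb, Matrix.mulVec_smul, ea, smul_smul]⟩
      inv_mem' := by
        rintro g ⟨lam, hlam, e⟩
        refine ⟨lam⁻¹, inv_ne_zero hlam, ?_⟩
        have h2 := glift_inv_cancel m hm1 g (Nvec F m)
        rw [e, Matrix.mulVec_smul] at h2
        have h3 : (glift F m ((g⁻¹ : GL (Fin 2) F) : Matrix (Fin 2) (Fin 2) F)).mulVec (Nvec F m)
            = lam⁻¹ • (lam • (glift F m ((g⁻¹ : GL (Fin 2) F) :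
                Matrix (Fin 2) (Fin 2) F)).mulVec (Nvec F m)) := by
          rw [smul_smul, inv_mul_cancel₀ hlam, one_smul]
        rw [h3, h2] } with hD
  have key : ∀ g h : GL (Fin 2) F, f g = f h ↔ g⁻¹ * h ∈ D := by
    intro g h
    rw [hf]
    rw [Projectivization.mk_eq_mk_iff]
    constructor
    · rintro ⟨u, hu⟩
      refine ⟨((u⁻¹ : Fˣ) : F), Units.ne_zero _, ?_⟩
      have hu' : (glift F m ((h : GL (Fin 2) F) : Matrix (Fin 2) (Fin 2) F)).mulVec (Nvec F m)
          = u⁻¹ • ((glift F m ((g : GL (Fin 2) F) :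
              Matrix (Fin 2) (Fin 2) F)).mulVec (Nvec F m)) := by
        rw [← hu, inv_smul_smul]
      rw [glift_mulVec_coe_mul m hm1, hu', Units.smul_def, Matrix.mulVec_smul,
        glift_inv_cancel m hm1]
    · rintro ⟨lam, hlam, e⟩
      refine ⟨(Units.mk0 lam hlam)⁻¹, ?_⟩
      have h4 : (glift F m ((h : GL (Fin 2) F) : Matrix (Fin 2) (Fin 2) F)).mulVec (Nvec F m)
          = lam • (glift F m ((g : GL (Fin 2) F) : Matrix (Fin 2) (Fin 2) F)).mulVec (Nvec F m) := by
        have h3 := glift_mulVec_coe_mul m hm1 g (g⁻¹ * h) (Nvec F m)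
        rw [mul_inv_cancel_left, e, Matrix.mulVec_smul] at h3
        exact h3
      rw [h4, Units.smul_def, smul_smul, Units.val_inv_eq_inv_val, Units.val_mk0,
        inv_mul_cancel₀ hlam, one_smul]
  have hset : {y : Projectivization F (Fin m → F) |
      ∃ g : Matrix.GeneralLinearGroup (Fin 2) F,
        ∃ hw : (glift F m (g : Matrix (Fin 2) (Fin 2) F)).mulVec (Nvec F m) ≠ 0,
          y = Projectivization.mk F
            ((glift F m (g : Matrix (Fin 2) (Fin 2) F)).mulVec (Nvec F m)) hw}
      = Set.range f := by
    ext y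
    simp only [Set.mem_setOf_eq, Set.mem_range]
    constructor
    · rintro ⟨g, hw, rfl⟩
      exact ⟨g, rfl⟩
    · rintro ⟨g, rfl⟩
      exact ⟨g, glift_mulVec_ne_zero m (by omega) g, rfl⟩
  rw [hset]
  set fbar : (GL (Fin 2) F ⧸ D) → Projectivization F (Fin m → F) :=
    fun x => Quotient.liftOn' x f
      (fun g h hgh => (key g h).mpr (QuotientGroup.leftRel_apply.mp hgh)) with hfbar
  have hinj : Function.Injective fbar := by
    intro x y
    refine Quotient.inductionOn₂' x y (fun g h hgh => ?_)
    exact Quotient.sound' (QuotientGroup.leftRel_apply.mpr ((key g h).mp hgh))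
  have hrange : Set.range fbar = Set.range f := Set.range_quotient_lift_on' _
  have e1 : Nat.card (GL (Fin 2) F ⧸ D) = Nat.card (Set.range f) := by
    rw [← hrange]
    exact Nat.card_congr (Equiv.ofInjective fbar hinj)
  -- cardinality of D
  have hDcard : Nat.card D = (Fintype.card F - 1) * (Fintype.card F - 1) := by
    have hMdet : ∀ p : Fˣ × Fˣ, IsUnit (Matrix.det !![((p.1 : F)), 0; 0, ((p.2 : F))]) := by
      intro p
      rw [Matrix.det_fin_two_of]
      simp only [mul_zero, zero_mul, sub_zero]
      exact isUnit_iff_ne_zero.mpr (mul_ne_zero p.1.ne_zero p.2.ne_zero)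
    let φ : Fˣ × Fˣ → D := fun p =>
      ⟨((Matrix.isUnit_iff_isUnit_det _).mpr (hMdet p)).unit, by
        refine (stab_iff m hm3 hchar _).mpr ⟨(p.1 : F), (p.2 : F), p.1.ne_zero, p.2.ne_zero, ?_⟩
        exact IsUnit.unit_spec _⟩
    have hφbij : Function.Bijective φ := by
      constructor
      · intro p p' hpp
        have hval : (!![((p.1 : F)), 0; 0, ((p.2 : F))] : Matrix (Fin 2) (Fin 2) F)
            = !![((p'.1 : F)), 0; 0, ((p'.2 : F))] := by
          have := congrArg (fun (x : D) => (((x : GL (Fin 2) F)) : Matrix (Fin 2) (Fin 2) F)) hpp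
          simpa [φ] using this
        have h1 : (p.1 : F) = (p'.1 : F) := by
          have := Matrix.ext_iff.mpr hval 0 0
          simpa using this
        have h2 : (p.2 : F) = (p'.2 : F) := by
          have := Matrix.ext_iff.mpr hval 1 1
          simpa using this
        exact Prod.ext (Units.ext h1) (Units.ext h2)
      · rintro ⟨g, hg⟩
        obtain ⟨a, d, ha, hd, hmat⟩ := (stab_iff m hm3 hchar g).mp hg
        refine ⟨(Units.mk0 a ha, Units.mk0 d hd), ?_⟩
        apply Subtype.ext
        apply Units.ext
        show (!![((Units.mk0 a ha : F)), 0; 0, ((Units.mk0 d hd : F))] : Matrix (Fin 2) (Fin 2) F) = _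
        rw [Units.val_mk0, Units.val_mk0, ← hmat]
    rw [← Nat.card_congr (Equiv.ofBijective φ hφbij), Nat.card_prod, Nat.card_units,
      Nat.card_eq_fintype_card]
  -- cardinality of GL
  have hGL : Nat.card (GL (Fin 2) F)
      = (Fintype.card F ^ 2 - 1) * (Fintype.card F ^ 2 - Fintype.card F) := by
    rw [Matrix.card_GL_field, Fin.prod_univ_two]
    norm_num
  have hG := Subgroup.card_eq_card_quotient_mul_card_subgroup D
  rw [hGL, hDcard] at hG
  set q := Fintype.card F with hq
  have hq2 : 2 ≤ q := Fintype.one_lt_card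
  have harith : (q ^ 2 - 1) * (q ^ 2 - q) = (q * (q + 1)) * ((q - 1) * (q - 1)) := by
    have h1 : 1 ≤ q ^ 2 := Nat.one_le_pow _ _ (by omega)
    have h2 : q ≤ q ^ 2 := by nlinarith
    have h3 : 1 ≤ q := by omega
    zify [h1, h2, h3]
    ring
  rw [harith] at hG
  have hpos : 0 < (q - 1) * (q - 1) := Nat.mul_pos (by omega) (by omega)
  have hQ : Nat.card (GL (Fin 2) F ⧸ D) = q * (q + 1) :=
    Nat.eq_of_mul_eq_mul_right hpos hG.symm
  rw [← Nat.card_coe_set_eq, ← e1, hQ]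

end AuxStmt14

/-- For $3 < m ≤ q$ with $m ≢ 1 \bmod p$: the stabilizer of $N_m = (0:...:0:1:0)$ in
$PGL_2(F_q)$ consists of the maps $t ↦ dt$ (i.e. the diagonal matrices), and the orbit
of $N_m$ has size $q(q+1)$. -/
theorem stmt14 (F : Type*) [Field F] [Fintype F] [DecidableEq F] (m : ℕ)
    (hm3 : 3 < m) (hmq : m ≤ Fintype.card F) (hchar : (m : F) ≠ 1) :
    (∀ g : Matrix.GeneralLinearGroup (Fin 2) F,
      (∃ lam : F, lam ≠ 0 ∧
          (glift F m (g : Matrix (Fin 2) (Fin 2) F)).mulVec (Nvec F m) = lam • Nvec F m) ↔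
      (∃ a d : F, a ≠ 0 ∧ d ≠ 0 ∧ (g : Matrix (Fin 2) (Fin 2) F) = !![a, 0; 0, d])) ∧
    Set.ncard {y : Projectivization F (Fin m → F) |
        ∃ g : Matrix.GeneralLinearGroup (Fin 2) F,
          ∃ hw : (glift F m (g : Matrix (Fin 2) (Fin 2) F)).mulVec (Nvec F m) ≠ 0,
            y = Projectivization.mk F
              ((glift F m (g : Matrix (Fin 2) (Fin 2) F)).mulVec (Nvec F m)) hw} =
      Fintype.card F * (Fintype.card F + 1) := by
  constructor
  · intro g
    exact stab_iff m hm3 hchar g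
  · exact orbit_card m hm3 hchar
end

section
/- Let 3 < m ≤ q with m ≡ 1 mod p. Then the stabilizer in PGL_2(F_q) of N_m = (0:...:0:1:0) under g · N_m := g_m N_m is the affine group {t ↦ dt + c : d ∈ F_q^×, c ∈ F_q}, and the orbit of N_m has size q+1. Moreover, the point N_m + c_m(∞) = (0:...:0:1:1) is not in the orbit of N_m, its stabilizer is the translation group {t ↦ t + c : c ∈ F_q}, and its orbit has size q^2 - 1. -/
open Matrix Polynomial

section PRS15Helpers

open Polynomial Matrix

variable {F : Type*} [Field F]

private lemma prs15_natDeg_lin (a b : F) : (C a + C b * X).natDegree ≤ 1 := by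
  refine (natDegree_add_le _ _).trans ?_
  simp only [natDegree_C, max_le_iff]
  exact ⟨by omega, (natDegree_C_mul_le _ _).trans natDegree_X_le⟩

private lemma prs15_reflect_lin (a b : F) : reflect 1 (C a + C b * X) = C b + C a * X := by
  ext n
  rw [coeff_reflect]
  match n with
  | 0 => rw [revAt_le (by omega)]; simp
  | 1 => rw [revAt_le (by omega)]; simp
  | (k+2) =>
    rw [revAt_eq_self_of_lt (by omega)]
    simp [coeff_C, coeff_C_mul, coeff_X]

private lemma prs15_reflect_lin_pow (a b : F) (n : ℕ) :
    reflect n ((C a + C b * X)^n) = (C b + C a * X)^n := by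
  induction n with
  | zero =>
    rw [pow_zero, pow_zero, show (1:F[X]) = C 1 * X^0 by simp, reflect_C_mul_X_pow]
    simp
  | succ n ih =>
    have h1 : ((C a + C b * X)^n).natDegree ≤ n :=
      (natDegree_pow_le).trans (by nlinarith [prs15_natDeg_lin a b])
    have : reflect (1 + n) ((C a + C b * X) * (C a + C b * X)^n)
        = reflect 1 (C a + C b * X) * reflect n ((C a + C b * X)^n) :=
      reflect_mul _ _ (prs15_natDeg_lin a b) h1
    rw [pow_succ, mul_comm ((C a + C b * X)^n), show n + 1 = 1 + n by omega, this,
      prs15_reflect_lin, ih, add_comm 1 n, pow_succ, mul_comm]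

private lemma prs15_coeff_prod_top (a b c d : F) (k i : ℕ) :
    ((C a + C b * X)^k * (C c + C d * X)^i).coeff (k+i) = b^k * d^i := by
  have h1 : ((C a + C b * X)^k).natDegree ≤ k :=
    (natDegree_pow_le).trans (by nlinarith [prs15_natDeg_lin a b])
  have h2 : ((C c + C d * X)^i).natDegree ≤ i :=
    (natDegree_pow_le).trans (by nlinarith [prs15_natDeg_lin c d])
  have hr : reflect (k+i) ((C a + C b * X)^k * (C c + C d * X)^i)
      = (C b + C a * X)^k * (C d + C c * X)^i := by
    rw [reflect_mul _ _ h1 h2, prs15_reflect_lin_pow, prs15_reflect_lin_pow]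
  have := congrArg (fun p => coeff p 0) hr
  simp only [coeff_reflect, revAt_zero] at this
  rw [this, coeff_zero_eq_eval_zero]
  simp

private lemma prs15_coeff_prod_sub (a b c d : F) (k i : ℕ) (h : 1 ≤ k + i) :
    ((C a + C b * X)^k * (C c + C d * X)^i).coeff (k+i-1) =
      (k:F) * a * b^(k-1) * d^i + (i:F) * b^k * c * d^(i-1) := by
  have h1 : ((C a + C b * X)^k).natDegree ≤ k :=
    (natDegree_pow_le).trans (by nlinarith [prs15_natDeg_lin a b])
  have h2 : ((C c + C d * X)^i).natDegree ≤ i :=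
    (natDegree_pow_le).trans (by nlinarith [prs15_natDeg_lin c d])
  have hr : reflect (k+i) ((C a + C b * X)^k * (C c + C d * X)^i)
      = (C b + C a * X)^k * (C d + C c * X)^i := by
    rw [reflect_mul _ _ h1 h2, prs15_reflect_lin_pow, prs15_reflect_lin_pow]
  have h3 := congrArg (fun p => coeff p 1) hr
  simp only [coeff_reflect] at h3
  rw [revAt_le h] at h3
  rw [h3]
  have hd : ((C b + C a * X)^k * (C d + C c * X)^i).coeff 1
      = (derivative ((C b + C a * X)^k * (C d + C c * X)^i)).coeff 0 := by
    rw [coeff_derivative]; ring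
  rw [hd, coeff_zero_eq_eval_zero, derivative_mul, derivative_pow, derivative_pow]
  simp
  ring

variable {m : ℕ}

private lemma prs15_Nvec_eq_single (hm : 3 < m) :
    Nvec F m = Pi.single (⟨m-2, by omega⟩ : Fin m) 1 := by
  funext j
  simp [Nvec, Pi.single_apply, Fin.ext_iff, eq_comm]

private lemma prs15_PRScol_none_eq_single (hm : 3 < m) :
    PRScol F m none = Pi.single (⟨m-1, by omega⟩ : Fin m) 1 := by
  funext j
  simp [PRScol, Pi.single_apply, Fin.ext_iff, eq_comm]

private lemma prs15_key1 (hm : 3 < m) (hchar : (m : F) = 1) (a b c d : F) (i : Fin m) :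
    (glift F m !![a,b;c,d]).mulVec (Nvec F m) i
      = ((i:ℕ):F) * (b*c - a*d) * b^(m-2-(i:ℕ)) * d^((i:ℕ)-1) := by
  rw [prs15_Nvec_eq_single hm, Matrix.mulVec_single]
  show glift F m !![a,b;c,d] i _ * 1 = _
  rw [mul_one]
  show ((C a + C b * X) ^ (m - 1 - (i : ℕ)) *
      (C c + C d * X) ^ (i : ℕ)).coeff (m-2) = _
  have hi : (i:ℕ) < m := i.isLt
  have e1 : m - 2 = (m - 1 - (i:ℕ)) + (i:ℕ) - 1 := by omega
  have e2 : (1:ℕ) ≤ (m - 1 - (i:ℕ)) + (i:ℕ) := by omega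
  have hps := prs15_coeff_prod_sub a b c d (m-1-(i:ℕ)) (i:ℕ) e2
  rw [← e1] at hps
  rw [hps]
  have hm1 : ((m - 1 : ℕ) : F) = 0 := by
    rw [Nat.cast_sub (by omega)]; rw [hchar]; ring
  have hsub : ((m - 1 - (i:ℕ) : ℕ) : F) = -((i:ℕ):F) := by
    rw [Nat.cast_sub (by omega), hm1]; ring
  rw [hsub]
  rcases Nat.eq_zero_or_pos (i:ℕ) with h0 | h1
  · simp [h0]
  rcases eq_or_lt_of_le (Nat.le_of_lt_succ (by omega : (i:ℕ) < (m-1)+1)) with htop | hlt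
  · have : ((i:ℕ):F) = 0 := by rw [htop, hm1]
    simp [this]
  · have hb : b ^ (m - 1 - (i:ℕ)) = b ^ (m-2-(i:ℕ)) * b := by
      rw [← pow_succ]; congr 1; omega
    have hd : d ^ (i:ℕ) = d ^ ((i:ℕ)-1) * d := by
      rw [← pow_succ]; congr 1; omega
    rw [show m - 1 - (i:ℕ) - 1 = m - 2 - (i:ℕ) by omega, hb, hd]
    ring

private lemma prs15_keyInf (hm : 3 < m) (a b c d : F) (i : Fin m) :
    (glift F m !![a,b;c,d]).mulVec (PRScol F m none) i
      = b^(m-1-(i:ℕ)) * d^(i:ℕ) := by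
  rw [prs15_PRScol_none_eq_single hm, Matrix.mulVec_single]
  show glift F m !![a,b;c,d] i _ * 1 = _
  rw [mul_one]
  show ((C a + C b * X) ^ (m - 1 - (i : ℕ)) *
      (C c + C d * X) ^ (i : ℕ)).coeff (m-1) = _
  have hi : (i:ℕ) < m := i.isLt
  have e1 : m - 1 = (m - 1 - (i:ℕ)) + (i:ℕ) := by omega
  have hps := prs15_coeff_prod_top a b c d (m-1-(i:ℕ)) (i:ℕ)
  rw [← e1] at hps
  rw [hps]

/-- parametrization of the orbit of `N`. -/
private def vN (F : Type*) [Field F] (m : ℕ) : Option F → Fin m → F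
  | some s => fun i => ((i : ℕ) : F) * s ^ ((i : ℕ) - 1)
  | none => Nvec F m

/-- parametrization of the orbit of `N + c_∞`. -/
private def vT (F : Type*) [Field F] (m : ℕ) : Option F → F → Fin m → F
  | some s => fun e i => s ^ (i : ℕ) + e * ((i : ℕ) : F) * s ^ ((i : ℕ) - 1)
  | none => fun r i =>
      (if (i : ℕ) = m - 2 then 1 else 0) + r * (if (i : ℕ) = m - 1 then 1 else 0)

section
variable (hm : 3 < m) (hchar : (m : F) = 1)

include hm hchar in
private lemma prs15_cast_m1 : ((m - 1 : ℕ) : F) = 0 := by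
  rw [Nat.cast_sub (by omega), hchar]; ring

include hm hchar in
private lemma prs15_cast_m2 : ((m - 2 : ℕ) : F) = -1 := by
  rw [Nat.cast_sub (by omega), hchar]; push_cast; ring

include hm hchar in
/-- b = 0 case for N. -/
private lemma prs15_vecA (a c d : F) :
    (glift F m !![a,0;c,d]).mulVec (Nvec F m) = (a * d^(m-2)) • Nvec F m := by
  funext i
  rw [prs15_key1 hm hchar]
  simp only [Pi.smul_apply, Nvec, smul_eq_mul]
  rcases lt_trichotomy (i : ℕ) (m-2) with h | h | h
  · rw [if_neg (by omega), zero_pow (by omega : m - 2 - (i:ℕ) ≠ 0)]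
    ring
  · rw [if_pos h, h, Nat.sub_self, pow_zero, prs15_cast_m2 hm hchar]
    rw [show m - 2 - 1 = m - 3 by omega,
      show d ^ (m-2) = d ^ (m-3) * d by rw [← pow_succ]; congr 1; omega]
    ring
  · have hi : (i : ℕ) = m - 1 := by have := i.isLt; omega
    rw [if_neg (by omega), hi, prs15_cast_m1 hm hchar]
    ring

include hm hchar in
/-- b ≠ 0 case for N. -/
private lemma prs15_vecB (a b c d : F) (hb : b ≠ 0) :
    (glift F m !![a,b;c,d]).mulVec (Nvec F m)
      = ((b*c - a*d) * b^(m-3)) • vN F m (some (d/b)) := by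
  funext i
  rw [prs15_key1 hm hchar]
  simp only [vN, Pi.smul_apply, smul_eq_mul]
  rcases Nat.eq_zero_or_pos (i : ℕ) with h0 | h1
  · simp [h0]
  rcases lt_or_eq_of_le (Nat.le_of_lt_succ (by have := i.isLt; omega : (i:ℕ) < (m-1)+1))
    with hlt | htop
  · have hbp : b ^ (m-3) = b ^ (m-2-(i:ℕ)) * b ^ ((i:ℕ)-1) := by
      rw [← pow_add]; congr 1; omega
    rw [div_pow, hbp]
    field_simp
  · rw [htop, prs15_cast_m1 hm hchar]
    ring

include hm hchar in
/-- b = 0 case for N + c_∞. -/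
private lemma prs15_vecA' (a c d : F) (ha : a ≠ 0) :
    (glift F m !![a,0;c,d]).mulVec (Nvec F m + PRScol F m none)
      = (a * d^(m-2)) • vT F m none (d/a) := by
  funext i
  rw [Matrix.mulVec_add, Pi.add_apply, prs15_key1 hm hchar, prs15_keyInf hm]
  simp only [vT, Pi.smul_apply, smul_eq_mul]
  rcases lt_trichotomy (i : ℕ) (m-2) with h | h | h
  · rw [if_neg (by omega), if_neg (by omega),
      zero_pow (by omega : m - 2 - (i:ℕ) ≠ 0), zero_pow (by omega : m - 1 - (i:ℕ) ≠ 0)]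
    ring
  · rw [if_pos h, if_neg (by omega), h, Nat.sub_self, pow_zero, prs15_cast_m2 hm hchar,
      zero_pow (by omega : m - 1 - (m-2) ≠ 0),
      show m - 2 - 1 = m - 3 by omega,
      show d ^ (m-2) = d ^ (m-3) * d by rw [← pow_succ]; congr 1; omega]
    ring
  · have hi : (i : ℕ) = m - 1 := by have := i.isLt; omega
    rw [if_neg (by omega), if_pos hi, hi, prs15_cast_m1 hm hchar, Nat.sub_self, pow_zero,
      show d ^ (m-1) = d ^ (m-2) * d by rw [← pow_succ]; congr 1; omega]
    field_simp
    ring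

include hm hchar in
/-- b ≠ 0 case for N + c_∞. -/
private lemma prs15_vecB' (a b c d : F) (hb : b ≠ 0) :
    (glift F m !![a,b;c,d]).mulVec (Nvec F m + PRScol F m none)
      = (b^(m-1)) • vT F m (some (d/b)) ((b*c - a*d)/b^2) := by
  funext i
  rw [Matrix.mulVec_add, Pi.add_apply, prs15_key1 hm hchar, prs15_keyInf hm]
  simp only [vT, Pi.smul_apply, smul_eq_mul]
  have h2 : b^(m-1-(i:ℕ)) * d^(i:ℕ) = b^(m-1) * (d/b)^(i:ℕ) := by
    rw [div_pow, show b^(m-1) = b^(m-1-(i:ℕ)) * b^(i:ℕ) from by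
      rw [← pow_add]; congr 1; have := i.isLt; omega]
    field_simp
  have h1 : ((i:ℕ):F) * (b*c - a*d) * b^(m-2-(i:ℕ)) * d^((i:ℕ)-1)
      = b^(m-1) * ((b*c - a*d)/b^2 * ((i:ℕ):F) * (d/b)^((i:ℕ)-1)) := by
    rcases Nat.eq_zero_or_pos (i : ℕ) with h0 | hp
    · simp [h0]
    rcases lt_or_eq_of_le (Nat.le_of_lt_succ (by have := i.isLt; omega : (i:ℕ) < (m-1)+1))
      with hlt | htop
    · have hbp : b ^ (m-1) = b ^ (m-2-(i:ℕ)) * b ^ ((i:ℕ)-1) * b^2 := by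
        rw [← pow_add, ← pow_add]; congr 1; omega
      rw [div_pow, hbp]
      field_simp
    · rw [htop, prs15_cast_m1 hm hchar]
      ring
  rw [h1, h2]
  ring

include hm in
private lemma prs15_vN_ne (t : Option F) : vN F m t ≠ 0 := by
  intro h
  match t with
  | none =>
    have := congrFun h ⟨m-2, by omega⟩
    simp [vN, Nvec] at this
  | some s =>
    have := congrFun h ⟨1, by omega⟩
    simp [vN] at this

include hm in
private lemma prs15_vT_ne (t : Option F) (e : F) : vT F m t e ≠ 0 := by
  intro h
  match t with
  | none =>
    have h1 := congrFun h ⟨m-2, by omega⟩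
    simp only [vT, Pi.zero_apply] at h1
    rw [if_neg (show ¬ (m-2 = m-1) by omega)] at h1
    simp at h1
  | some s =>
    have := congrFun h ⟨0, by omega⟩
    simp [vT] at this

include hm in
private lemma prs15_inj1 : Function.Injective
    (fun t : Option F => Projectivization.mk F (vN F m t) (prs15_vN_ne hm t)) := by
  intro t t' h
  rw [Projectivization.mk_eq_mk_iff'] at h
  obtain ⟨u, hu⟩ := h
  match t, t' with
  | none, none => rfl
  | none, some s =>
    exfalso
    have h1 := congrFun hu ⟨1, by omega⟩
    simp only [vN, Nvec, Pi.smul_apply, smul_eq_mul] at h1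
    rw [if_neg (show ¬ (1 = m-2) by omega)] at h1
    simp at h1
    have h2 := congrFun hu ⟨m-2, by omega⟩
    simp only [vN, Nvec, Pi.smul_apply, smul_eq_mul, if_pos rfl] at h2
    rw [h1] at h2
    simp at h2
  | some s, none =>
    exfalso
    have h1 := congrFun hu ⟨1, by omega⟩
    simp only [vN, Nvec, Pi.smul_apply, smul_eq_mul] at h1
    rw [if_neg (show ¬ (1 = m-2) by omega)] at h1
    simp at h1
  | some s, some s' =>
    have h1 := congrFun hu ⟨1, by omega⟩
    simp [vN] at h1
    subst h1
    have heq : ∀ k : ℕ, k < m → ((k : F) * s' ^ (k-1) = (k : F) * s ^ (k-1)) := by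
      intro k hk
      have := congrFun hu ⟨k, hk⟩
      simpa [vN] using this
    by_cases h2 : (2 : F) = 0
    · have h3 := heq 3 (by omega)
      have h3ne : ((3:ℕ) : F) ≠ 0 := by
        push_cast
        intro hc
        have : (1 : F) = 0 := by linear_combination hc - h2
        simp at this
      have hsq : s' ^ 2 = s ^ 2 := by
        have := mul_left_cancel₀ h3ne h3
        simpa using this
      have hz : (s - s')^2 = 0 := by
        linear_combination hsq + (s^2 - s*s') * h2
      have hss : s = s' := by
        have := sub_eq_zero.mp (pow_eq_zero_iff (two_ne_zero) |>.mp hz)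
        exact this.symm ▸ rfl
      rw [hss]
    · have h3 := heq 2 (by omega)
      push_cast at h3
      have h4 := mul_left_cancel₀ h2 h3
      simp only [pow_one] at h4
      rw [h4]

include hm in
private lemma prs15_inj2 : Function.Injective
    (fun p : Option F × {e : F // e ≠ 0} =>
      Projectivization.mk F (vT F m p.1 p.2.val) (prs15_vT_ne hm p.1 p.2.val)) := by
  rintro ⟨t, e, he⟩ ⟨t', e', he'⟩ h
  rw [Projectivization.mk_eq_mk_iff'] at h
  obtain ⟨u, hu⟩ := h
  simp only at hu
  match t, t' with
  | none, none =>
    have h1 := congrFun hu ⟨m-2, by omega⟩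
    simp only [vT, Pi.smul_apply, smul_eq_mul] at h1
    rw [if_neg (show ¬ (m-2 = m-1) by omega)] at h1
    simp at h1
    have h2 := congrFun hu ⟨m-1, by omega⟩
    simp only [vT, Pi.smul_apply, smul_eq_mul] at h2
    rw [if_neg (show ¬ (m-1 = m-2) by omega)] at h2
    rw [h1] at h2
    simp at h2
    simp [h2]
  | none, some s =>
    exfalso
    have h1 := congrFun hu ⟨0, by omega⟩
    simp only [vT, Pi.smul_apply, smul_eq_mul] at h1
    rw [if_neg (show ¬ (0 = m-2) by omega), if_neg (show ¬ (0 = m-1) by omega)] at h1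
    simp at h1
    rw [h1, zero_smul] at hu
    exact prs15_vT_ne hm none _ hu.symm
  | some s, none =>
    exfalso
    have h1 := congrFun hu ⟨0, by omega⟩
    simp only [vT, Pi.smul_apply, smul_eq_mul] at h1
    rw [if_neg (show ¬ (0 = m-2) by omega), if_neg (show ¬ (0 = m-1) by omega)] at h1
    simp at h1
  | some s, some s' =>
    have h0 := congrFun hu ⟨0, by omega⟩
    simp [vT] at h0
    subst h0
    have heq : ∀ k : ℕ, k < m →
        s' ^ k + e' * (k : F) * s' ^ (k-1) = s ^ k + e * (k : F) * s ^ (k-1) := by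
      intro k hk
      have := congrFun hu ⟨k, hk⟩
      simpa [vT] using this
    have e1 := heq 1 (by omega)
    have e2 := heq 2 (by omega)
    have e3 := heq 3 (by omega)
    push_cast at e1 e2 e3
    simp only [pow_one, mul_one] at e1 e2 e3
    by_cases hss : s = s'
    · subst hss
      have hee : e = e' := by linear_combination -e1
      simp [hee]
    · exfalso
      have hd : s - s' ≠ 0 := sub_ne_zero.mpr hss
      have g1 : (s - s') * ((s - s') + 2 * e) = 0 := by
        linear_combination 2*s'*e1 - e2
      have g2 : (s - s') * ((s - s')*(s + 2*s') + 3*e*(s + s')) = 0 := by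
        linear_combination 3*s'^2*e1 - e3
      have A : (s - s') + 2 * e = 0 := (mul_eq_zero.mp g1).resolve_left hd
      have B : (s - s')*(s + 2*s') + 3*e*(s + s') = 0 := (mul_eq_zero.mp g2).resolve_left hd
      have hez : e * (s - s') = 0 := by
        linear_combination B - (s + 2*s') * A
      rcases mul_eq_zero.mp hez with h | h
      · exact he h
      · exact hd h
end

section
open Matrix
variable {F : Type*} [Field F] {m : ℕ}

private lemma prs15_det_ne (g : Matrix.GeneralLinearGroup (Fin 2) F) :
    (g : Matrix (Fin 2) (Fin 2) F) 0 0 * (g : Matrix (Fin 2) (Fin 2) F) 1 1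
      - (g : Matrix (Fin 2) (Fin 2) F) 0 1 * (g : Matrix (Fin 2) (Fin 2) F) 1 0 ≠ 0 := by
  have h : IsUnit ((g : Matrix (Fin 2) (Fin 2) F)).det :=
    (Matrix.isUnit_iff_isUnit_det _).mp g.isUnit
  rw [Matrix.det_fin_two] at h
  exact h.ne_zero

private lemma prs15_mk_gl (A : Matrix (Fin 2) (Fin 2) F) (h : A.det ≠ 0) :
    ∃ g : Matrix.GeneralLinearGroup (Fin 2) F, (g : Matrix (Fin 2) (Fin 2) F) = A :=
  ⟨((Matrix.isUnit_iff_isUnit_det A).mpr (isUnit_iff_ne_zero.mpr h)).unit,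
    IsUnit.unit_spec _⟩

private lemma prs15_eta (g : Matrix.GeneralLinearGroup (Fin 2) F) :
    (g : Matrix (Fin 2) (Fin 2) F)
      = !![(g : Matrix (Fin 2) (Fin 2) F) 0 0, (g : Matrix (Fin 2) (Fin 2) F) 0 1;
          (g : Matrix (Fin 2) (Fin 2) F) 1 0, (g : Matrix (Fin 2) (Fin 2) F) 1 1] :=
  Matrix.etaExpand_eq (g : Matrix (Fin 2) (Fin 2) F) ▸ rfl

private lemma prs15_vT_one (hm : 3 < m) :
    vT F m none 1 = Nvec F m + PRScol F m none := by
  funext i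
  simp [vT, Nvec, PRScol, Pi.add_apply]

variable (hm : 3 < m) (hchar : (m : F) = 1)

include hm hchar in
private lemma prs15_part1 (g : Matrix.GeneralLinearGroup (Fin 2) F) :
    (∃ lam : F, lam ≠ 0 ∧
        (glift F m (g : Matrix (Fin 2) (Fin 2) F)).mulVec (Nvec F m) = lam • Nvec F m) ↔
      (∃ a c d : F, a ≠ 0 ∧ d ≠ 0 ∧ (g : Matrix (Fin 2) (Fin 2) F) = !![a, 0; c, d]) := by
  set a := (g : Matrix (Fin 2) (Fin 2) F) 0 0 with ha'
  set b := (g : Matrix (Fin 2) (Fin 2) F) 0 1 with hb'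
  set c := (g : Matrix (Fin 2) (Fin 2) F) 1 0 with hc'
  set d := (g : Matrix (Fin 2) (Fin 2) F) 1 1 with hd'
  have hdet : a * d - b * c ≠ 0 := prs15_det_ne g
  constructor
  · rintro ⟨lam, hlam, heq⟩
    by_cases hb : b = 0
    · rw [hb] at hdet
      have had : a * d ≠ 0 := by intro hc0; apply hdet; rw [hc0]; ring
      refine ⟨a, c, d, (mul_ne_zero_iff.mp had).1, (mul_ne_zero_iff.mp had).2, ?_⟩
      rw [prs15_eta g, ← ha', ← hb', ← hc', ← hd', hb]
    · exfalso
      rw [prs15_eta g, ← ha', ← hb', ← hc', ← hd'] at heq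
      rw [prs15_vecB hm hchar a b c d hb] at heq
      have key := congrFun heq ⟨1, by omega⟩
      simp only [vN, Pi.smul_apply, smul_eq_mul, Nvec] at key
      rw [if_neg (show ¬ (1 = m-2) by omega)] at key
      simp at key
      rcases key with key | key
      · exact hdet (by linear_combination -key)
      · exact hb key.1
  · rintro ⟨a0, c0, d0, ha0, hd0, hg⟩
    refine ⟨a0 * d0^(m-2), mul_ne_zero ha0 (pow_ne_zero _ hd0), ?_⟩
    rw [hg]
    exact prs15_vecA hm hchar a0 c0 d0

include hm hchar in
private lemma prs15_part3 :
    ¬ ∃ g : Matrix.GeneralLinearGroup (Fin 2) F, ∃ lam : F, lam ≠ 0 ∧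
        (glift F m (g : Matrix (Fin 2) (Fin 2) F)).mulVec (Nvec F m) =
          lam • (Nvec F m + PRScol F m none) := by
  rintro ⟨g, lam, hlam, heq⟩
  set a := (g : Matrix (Fin 2) (Fin 2) F) 0 0 with ha'
  set b := (g : Matrix (Fin 2) (Fin 2) F) 0 1 with hb'
  set c := (g : Matrix (Fin 2) (Fin 2) F) 1 0 with hc'
  set d := (g : Matrix (Fin 2) (Fin 2) F) 1 1 with hd'
  rw [prs15_eta g, ← ha', ← hb', ← hc', ← hd'] at heq
  have hrhs : (lam • (Nvec F m + PRScol F m none)) ⟨m-1, by omega⟩ = lam := by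
    simp only [Pi.smul_apply, Pi.add_apply, Nvec, PRScol, smul_eq_mul]
    rw [if_neg (show ¬ (m-1 = m-2) by omega)]
    simp
  by_cases hb : b = 0
  · rw [hb, prs15_vecA hm hchar a c d] at heq
    have key := congrFun heq ⟨m-1, by omega⟩
    rw [hrhs] at key
    simp only [Pi.smul_apply, Nvec, smul_eq_mul] at key
    rw [if_neg (show ¬ (m-1 = m-2) by omega)] at key
    simp at key
    exact hlam key.symm
  · rw [prs15_vecB hm hchar a b c d hb] at heq
    have key := congrFun heq ⟨m-1, by omega⟩
    rw [hrhs] at key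
    simp only [vN, Pi.smul_apply, smul_eq_mul] at key
    rw [show ((m-1 : ℕ) : F) = 0 from prs15_cast_m1 hm hchar] at key
    simp at key
    exact hlam key.symm

include hm hchar in
private lemma prs15_part4 (g : Matrix.GeneralLinearGroup (Fin 2) F) :
    (∃ lam : F, lam ≠ 0 ∧
        (glift F m (g : Matrix (Fin 2) (Fin 2) F)).mulVec (Nvec F m + PRScol F m none) =
          lam • (Nvec F m + PRScol F m none)) ↔
      (∃ a c : F, a ≠ 0 ∧ (g : Matrix (Fin 2) (Fin 2) F) = !![a, 0; c, a]) := by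
  set a := (g : Matrix (Fin 2) (Fin 2) F) 0 0 with ha'
  set b := (g : Matrix (Fin 2) (Fin 2) F) 0 1 with hb'
  set c := (g : Matrix (Fin 2) (Fin 2) F) 1 0 with hc'
  set d := (g : Matrix (Fin 2) (Fin 2) F) 1 1 with hd'
  have hdet : a * d - b * c ≠ 0 := prs15_det_ne g
  constructor
  · rintro ⟨lam, hlam, heq⟩
    rw [prs15_eta g, ← ha', ← hb', ← hc', ← hd'] at heq
    by_cases hb : b = 0
    · rw [hb] at hdet
      have had : a * d ≠ 0 := by intro hc0; apply hdet; rw [hc0]; ring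
      have ha0 : a ≠ 0 := (mul_ne_zero_iff.mp had).1
      have hd0 : d ≠ 0 := (mul_ne_zero_iff.mp had).2
      rw [hb, prs15_vecA' hm hchar a c d ha0, ← prs15_vT_one hm] at heq
      -- compare at m-2 and m-1
      have k1 := congrFun heq ⟨m-2, by omega⟩
      have k2 := congrFun heq ⟨m-1, by omega⟩
      simp only [vT, Pi.smul_apply, smul_eq_mul] at k1 k2
      rw [if_neg (show ¬ (m-2 = m-1) by omega)] at k1
      rw [if_neg (show ¬ (m-1 = m-2) by omega)] at k2
      simp at k1 k2
      have had' : a = d := by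
        have hdm : d^(m-2) ≠ 0 := pow_ne_zero _ hd0
        have h6 : a * d ^ (m-2) * (d/a) = a * d ^ (m-2) * (a/a) := by
          rw [div_self ha0, mul_one, k2, k1]
        have h7 : d / a = a / a := mul_left_cancel₀ (mul_ne_zero ha0 hdm) h6
        have h8 := congrArg (· * a) h7
        simp only [div_mul_cancel₀ _ ha0] at h8
        exact h8.symm
      exact ⟨a, c, ha0, by rw [prs15_eta g, ← ha', ← hb', ← hc', ← hd', hb, ← had']⟩
    · exfalso
      rw [prs15_vecB' hm hchar a b c d hb, ← prs15_vT_one hm] at heq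
      have k0 := congrFun heq ⟨0, by omega⟩
      simp only [vT, Pi.smul_apply, smul_eq_mul] at k0
      rw [if_neg (show ¬ (0 = m-2) by omega), if_neg (show ¬ (0 = m-1) by omega)] at k0
      simp at k0
      exact hb k0.1
  · rintro ⟨a0, c0, ha0, hg⟩
    refine ⟨a0 * a0^(m-2), mul_ne_zero ha0 (pow_ne_zero _ ha0), ?_⟩
    rw [hg, prs15_vecA' hm hchar a0 c0 a0 ha0, div_self ha0, prs15_vT_one hm]

end

section
open Matrix
variable {F : Type*} [Field F] {m : ℕ}

private lemma prs15_mk_of_smul {v w : Fin m → F} (lam : F) (hlam : lam ≠ 0) (hv : v ≠ 0)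
    (hw : w = lam • v) :
    ∃ hwne : w ≠ 0, Projectivization.mk F v hv = Projectivization.mk F w hwne := by
  have hwne : w ≠ 0 := by rw [hw]; exact smul_ne_zero hlam hv
  refine ⟨hwne, ?_⟩
  rw [Projectivization.mk_eq_mk_iff']
  exact ⟨lam⁻¹, by rw [hw, smul_smul, inv_mul_cancel₀ hlam, one_smul]⟩

variable (hm : 3 < m) (hchar : (m : F) = 1)

include hm hchar in
private lemma prs15_orbit1 :
    {y : Projectivization F (Fin m → F) |
        ∃ g : Matrix.GeneralLinearGroup (Fin 2) F,
          ∃ hw : (glift F m (g : Matrix (Fin 2) (Fin 2) F)).mulVec (Nvec F m) ≠ 0,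
            y = Projectivization.mk F
              ((glift F m (g : Matrix (Fin 2) (Fin 2) F)).mulVec (Nvec F m)) hw}
    = Set.range (fun t : Option F => Projectivization.mk F (vN F m t) (prs15_vN_ne hm t)) := by
  ext y
  simp only [Set.mem_setOf_eq, Set.mem_range]
  constructor
  · rintro ⟨g, hw, rfl⟩
    set a := (g : Matrix (Fin 2) (Fin 2) F) 0 0 with ha'
    set b := (g : Matrix (Fin 2) (Fin 2) F) 0 1 with hb'
    set c := (g : Matrix (Fin 2) (Fin 2) F) 1 0 with hc'
    set d := (g : Matrix (Fin 2) (Fin 2) F) 1 1 with hd'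
    have hdet : a * d - b * c ≠ 0 := prs15_det_ne g
    by_cases hb : b = 0
    · rw [hb] at hdet
      have had : a * d ≠ 0 := by intro hc0; apply hdet; rw [hc0]; ring
      have ha0 : a ≠ 0 := (mul_ne_zero_iff.mp had).1
      have hd0 : d ≠ 0 := (mul_ne_zero_iff.mp had).2
      have hA : (glift F m (g : Matrix (Fin 2) (Fin 2) F)).mulVec (Nvec F m)
          = (a * d^(m-2)) • vN F m none := by
        conv_lhs => rw [prs15_eta g, ← ha', ← hb', ← hc', ← hd', hb]
        exact prs15_vecA hm hchar a c d
      obtain ⟨hwne, hmk⟩ := prs15_mk_of_smul (a * d^(m-2))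
        (mul_ne_zero ha0 (pow_ne_zero _ hd0)) (prs15_vN_ne hm none) hA
      exact ⟨none, hmk⟩
    · have hsub : b * c - a * d ≠ 0 := fun h => hdet (by linear_combination -h)
      have hA : (glift F m (g : Matrix (Fin 2) (Fin 2) F)).mulVec (Nvec F m)
          = ((b*c - a*d) * b^(m-3)) • vN F m (some (d/b)) := by
        conv_lhs => rw [prs15_eta g, ← ha', ← hb', ← hc', ← hd']
        exact prs15_vecB hm hchar a b c d hb
      obtain ⟨hwne, hmk⟩ := prs15_mk_of_smul ((b*c - a*d) * b^(m-3))
        (mul_ne_zero hsub (pow_ne_zero _ hb)) (prs15_vN_ne hm (some (d/b))) hA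
      exact ⟨some (d/b), hmk⟩
  · rintro ⟨t, rfl⟩
    match t with
    | none =>
      have hco : ((1 : Matrix.GeneralLinearGroup (Fin 2) F) : Matrix (Fin 2) (Fin 2) F)
          = !![1,0;0,1] := by
        rw [Units.val_one]; exact Matrix.one_fin_two
      have hA : (glift F m ((1 : Matrix.GeneralLinearGroup (Fin 2) F) :
            Matrix (Fin 2) (Fin 2) F)).mulVec (Nvec F m)
          = ((1:F) * (1:F)^(m-2)) • vN F m none := by
        rw [hco]; exact prs15_vecA hm hchar 1 0 1
      obtain ⟨hwne, hmk⟩ := prs15_mk_of_smul ((1:F) * (1:F)^(m-2)) (by norm_num)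
        (prs15_vN_ne hm none) hA
      exact ⟨1, hwne, hmk⟩
    | some s =>
      obtain ⟨g, hg⟩ := prs15_mk_gl !![0,1;(-1:F),s] (by
        rw [Matrix.det_fin_two_of]; norm_num)
      have hA : (glift F m (g : Matrix (Fin 2) (Fin 2) F)).mulVec (Nvec F m)
          = ((1*(-1) - 0*s) * (1:F)^(m-3)) • vN F m (some (s/1)) := by
        rw [hg]; exact prs15_vecB hm hchar 0 1 (-1) s one_ne_zero
      rw [div_one] at hA
      obtain ⟨hwne, hmk⟩ := prs15_mk_of_smul ((1*(-1) - 0*s) * (1:F)^(m-3)) (by norm_num)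
        (prs15_vN_ne hm (some s)) hA
      exact ⟨g, hwne, hmk⟩

include hm hchar in
private lemma prs15_orbit2 :
    {y : Projectivization F (Fin m → F) |
        ∃ g : Matrix.GeneralLinearGroup (Fin 2) F,
          ∃ hw : (glift F m (g : Matrix (Fin 2) (Fin 2) F)).mulVec
              (Nvec F m + PRScol F m none) ≠ 0,
            y = Projectivization.mk F
              ((glift F m (g : Matrix (Fin 2) (Fin 2) F)).mulVec
                (Nvec F m + PRScol F m none)) hw}
    = Set.range (fun p : Option F × {e : F // e ≠ 0} =>
        Projectivization.mk F (vT F m p.1 p.2.val) (prs15_vT_ne hm p.1 p.2.val)) := by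
  ext y
  simp only [Set.mem_setOf_eq, Set.mem_range]
  constructor
  · rintro ⟨g, hw, rfl⟩
    set a := (g : Matrix (Fin 2) (Fin 2) F) 0 0 with ha'
    set b := (g : Matrix (Fin 2) (Fin 2) F) 0 1 with hb'
    set c := (g : Matrix (Fin 2) (Fin 2) F) 1 0 with hc'
    set d := (g : Matrix (Fin 2) (Fin 2) F) 1 1 with hd'
    have hdet : a * d - b * c ≠ 0 := prs15_det_ne g
    by_cases hb : b = 0
    · rw [hb] at hdet
      have had : a * d ≠ 0 := by intro hc0; apply hdet; rw [hc0]; ring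
      have ha0 : a ≠ 0 := (mul_ne_zero_iff.mp had).1
      have hd0 : d ≠ 0 := (mul_ne_zero_iff.mp had).2
      have hA : (glift F m (g : Matrix (Fin 2) (Fin 2) F)).mulVec (Nvec F m + PRScol F m none)
          = (a * d^(m-2)) • vT F m none (d/a) := by
        conv_lhs => rw [prs15_eta g, ← ha', ← hb', ← hc', ← hd', hb]
        exact prs15_vecA' hm hchar a c d ha0
      obtain ⟨hwne, hmk⟩ := prs15_mk_of_smul (a * d^(m-2))
        (mul_ne_zero ha0 (pow_ne_zero _ hd0)) (prs15_vT_ne hm none (d/a)) hA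
      exact ⟨(none, ⟨d/a, div_ne_zero hd0 ha0⟩), hmk⟩
    · have hsub : b * c - a * d ≠ 0 := fun h => hdet (by linear_combination -h)
      have hA : (glift F m (g : Matrix (Fin 2) (Fin 2) F)).mulVec (Nvec F m + PRScol F m none)
          = (b^(m-1)) • vT F m (some (d/b)) ((b*c - a*d)/b^2) := by
        conv_lhs => rw [prs15_eta g, ← ha', ← hb', ← hc', ← hd']
        exact prs15_vecB' hm hchar a b c d hb
      obtain ⟨hwne, hmk⟩ := prs15_mk_of_smul (b^(m-1)) (pow_ne_zero _ hb)
        (prs15_vT_ne hm (some (d/b)) _) hA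
      exact ⟨(some (d/b), ⟨(b*c - a*d)/b^2, div_ne_zero hsub (pow_ne_zero _ hb)⟩), hmk⟩
  · rintro ⟨⟨t, e, he⟩, rfl⟩
    match t with
    | none =>
      obtain ⟨g, hg⟩ := prs15_mk_gl !![(1:F),0;0,e] (by
        rw [Matrix.det_fin_two_of]; simpa using he)
      have hA : (glift F m (g : Matrix (Fin 2) (Fin 2) F)).mulVec (Nvec F m + PRScol F m none)
          = ((1:F) * e^(m-2)) • vT F m none (e/1) := by
        rw [hg]; exact prs15_vecA' hm hchar 1 0 e one_ne_zero
      rw [div_one] at hA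
      obtain ⟨hwne, hmk⟩ := prs15_mk_of_smul ((1:F) * e^(m-2))
        (by simpa using pow_ne_zero (m-2) he) (prs15_vT_ne hm none e) hA
      exact ⟨g, hwne, hmk⟩
    | some s =>
      obtain ⟨g, hg⟩ := prs15_mk_gl !![0,1;e,s] (by
        rw [Matrix.det_fin_two_of]; simpa using he)
      have hA : (glift F m (g : Matrix (Fin 2) (Fin 2) F)).mulVec (Nvec F m + PRScol F m none)
          = ((1:F)^(m-1)) • vT F m (some (s/1)) ((1*e - 0*s)/1^2) := by
        rw [hg]; exact prs15_vecB' hm hchar 0 1 e s one_ne_zero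
      rw [div_one, show (1*e - 0*s)/(1:F)^2 = e by norm_num] at hA
      obtain ⟨hwne, hmk⟩ := prs15_mk_of_smul ((1:F)^(m-1)) (by norm_num)
        (prs15_vT_ne hm (some s) e) hA
      exact ⟨g, hwne, hmk⟩

include hm hchar in
private lemma prs15_part2 [Fintype F] :
    Set.ncard {y : Projectivization F (Fin m → F) |
        ∃ g : Matrix.GeneralLinearGroup (Fin 2) F,
          ∃ hw : (glift F m (g : Matrix (Fin 2) (Fin 2) F)).mulVec (Nvec F m) ≠ 0,
            y = Projectivization.mk F
              ((glift F m (g : Matrix (Fin 2) (Fin 2) F)).mulVec (Nvec F m)) hw}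
      = Fintype.card F + 1 := by
  rw [prs15_orbit1 hm hchar, ← Nat.card_coe_set_eq,
    Nat.card_range_of_injective (prs15_inj1 hm), Nat.card_eq_fintype_card,
    Fintype.card_option]

include hm hchar in
private lemma prs15_part5 [Fintype F] [DecidableEq F] :
    Set.ncard {y : Projectivization F (Fin m → F) |
        ∃ g : Matrix.GeneralLinearGroup (Fin 2) F,
          ∃ hw : (glift F m (g : Matrix (Fin 2) (Fin 2) F)).mulVec
              (Nvec F m + PRScol F m none) ≠ 0,
            y = Projectivization.mk F
              ((glift F m (g : Matrix (Fin 2) (Fin 2) F)).mulVec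
                (Nvec F m + PRScol F m none)) hw}
      = Fintype.card F ^ 2 - 1 := by
  rw [prs15_orbit2 hm hchar, ← Nat.card_coe_set_eq,
    Nat.card_range_of_injective (prs15_inj2 hm), Nat.card_prod,
    Nat.card_eq_fintype_card, Nat.card_eq_fintype_card, Fintype.card_option]
  have hcard : Fintype.card {e : F // e ≠ 0} = Fintype.card F - 1 := by
    simp [Fintype.card_subtype_compl]
  rw [hcard]
  have hq : 1 ≤ Fintype.card F := Fintype.card_pos
  obtain ⟨k, hk⟩ : ∃ k, Fintype.card F = k + 1 := ⟨Fintype.card F - 1, by omega⟩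
  rw [hk]
  simp only [Nat.add_sub_cancel]
  symm
  apply Nat.sub_eq_of_eq_add
  ring

end
end PRS15Helpers
/-- For $3 < m ≤ q$ with $m ≡ 1 \bmod p$: the stabilizer of $N_m$ in $PGL_2(F_q)$ is the
affine group $t ↦ dt+c$, the orbit of $N_m$ has size $q+1$; moreover $N_m + c_m(∞)$ is not
in the orbit of $N_m$, its stabilizer is the translation group $t ↦ t+c$, and its orbit
has size $q^2-1$. -/
theorem stmt15 (F : Type*) [Field F] [Fintype F] [DecidableEq F] (m : ℕ)
    (hm3 : 3 < m) (hmq : m ≤ Fintype.card F) (hchar : (m : F) = 1) :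
    (∀ g : Matrix.GeneralLinearGroup (Fin 2) F,
      (∃ lam : F, lam ≠ 0 ∧
          (glift F m (g : Matrix (Fin 2) (Fin 2) F)).mulVec (Nvec F m) = lam • Nvec F m) ↔
      (∃ a c d : F, a ≠ 0 ∧ d ≠ 0 ∧ (g : Matrix (Fin 2) (Fin 2) F) = !![a, 0; c, d])) ∧
    Set.ncard {y : Projectivization F (Fin m → F) |
        ∃ g : Matrix.GeneralLinearGroup (Fin 2) F,
          ∃ hw : (glift F m (g : Matrix (Fin 2) (Fin 2) F)).mulVec (Nvec F m) ≠ 0,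
            y = Projectivization.mk F
              ((glift F m (g : Matrix (Fin 2) (Fin 2) F)).mulVec (Nvec F m)) hw} =
      Fintype.card F + 1 ∧
    (¬ ∃ g : Matrix.GeneralLinearGroup (Fin 2) F, ∃ lam : F, lam ≠ 0 ∧
        (glift F m (g : Matrix (Fin 2) (Fin 2) F)).mulVec (Nvec F m) =
          lam • (Nvec F m + PRScol F m none)) ∧
    (∀ g : Matrix.GeneralLinearGroup (Fin 2) F,
      (∃ lam : F, lam ≠ 0 ∧
          (glift F m (g : Matrix (Fin 2) (Fin 2) F)).mulVec (Nvec F m + PRScol F m none) =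
            lam • (Nvec F m + PRScol F m none)) ↔
      (∃ a c : F, a ≠ 0 ∧ (g : Matrix (Fin 2) (Fin 2) F) = !![a, 0; c, a])) ∧
    Set.ncard {y : Projectivization F (Fin m → F) |
        ∃ g : Matrix.GeneralLinearGroup (Fin 2) F,
          ∃ hw : (glift F m (g : Matrix (Fin 2) (Fin 2) F)).mulVec
              (Nvec F m + PRScol F m none) ≠ 0,
            y = Projectivization.mk F
              ((glift F m (g : Matrix (Fin 2) (Fin 2) F)).mulVec
                (Nvec F m + PRScol F m none)) hw} =
      Fintype.card F ^ 2 - 1 := by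
  exact ⟨fun g => prs15_part1 hm3 hchar g, prs15_part2 hm3 hchar, prs15_part3 hm3 hchar,
    fun g => prs15_part4 hm3 hchar g, prs15_part5 hm3 hchar⟩
end

section
/- Let 2 ≤ k ≤ q-3 and fix 1 ≤ i ≤ q and a ∈ F_q. For the word u(i,a) ∈ F_q^{q+1} with coordinates 1/(α_j - α_i) for j ≠ i (j ≤ q), a in position i, and 0 in position q+1, the syndrome G_{q+1-k} · u(i,a)^T equals a·c_{q+1-k}(α_i) - c'_{q+1-k}(α_i), where c'_m(t) = (0, 1, 2t, 3t^2, ..., (m-1)t^{m-2})^T. -/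
open Matrix Polynomial

/-! Row `j` of the syndrome is `a b^j + ∑_{x ≠ b} x^j / (x - b)`. Dividing `x^j - b^j` by `x - b`
writes `x^j / (x - b)` as `b^j / (x - b)` plus the geometric sum `∑_{l < j} x^l b^{j-1-l}`.
Summed over `x ≠ b`, the first part vanishes because `∑_{y ≠ 0} 1/y = ∑_y y = 0`, and the power-sum
identity `∑_x x^l = 0` for `l < q - 1` turns the second into `∑_{l < j} (-b^l) b^{j-1-l} = -j b^{j-1}`. -/

open Finset

namespace FiniteField

variable {K : Type*} [Field K] [Fintype K]

theorem sum_erase_pow_eq_neg [DecidableEq K] (b : K) {l : ℕ} (hl : l < Fintype.card K - 1) :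
    ∑ x ∈ univ.erase b, x ^ l = -b ^ l := by
  rw [sum_erase_eq_sub (mem_univ b), sum_pow_lt_card_sub_one (K := K) l hl, zero_sub]

theorem sum_inv_sub_eq_zero (b : K) (hK : 2 < Fintype.card K) : ∑ x : K, (x - b)⁻¹ = 0 := by
  calc ∑ x : K, (x - b)⁻¹ = ∑ y : K, y⁻¹ := (Equiv.subRight b).sum_comp (·⁻¹)
    _ = ∑ y : K, y := Equiv.sum_comp (Equiv.inv K) id
    _ = 0 := by simpa using sum_pow_lt_card_sub_one (K := K) 1 (by omega)

theorem sum_erase_pow_mul_inv_sub [DecidableEq K] (b : K) (hK : 2 < Fintype.card K) {n : ℕ}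
    (hn : n < Fintype.card K) :
    ∑ x ∈ univ.erase b, x ^ n * (x - b)⁻¹ = -(n * b ^ (n - 1)) := by
  have hdiv : ∀ x ∈ univ.erase b, x ^ n * (x - b)⁻¹ =
      b ^ n * (x - b)⁻¹ + ∑ l ∈ range n, x ^ l * b ^ (n - 1 - l) := by
    intro x hx
    have hxb : x - b ≠ 0 := sub_ne_zero.mpr (ne_of_mem_erase hx)
    field_simp
    rw [mul_comm, geom_sum₂_mul]
    ring
  have hinv : ∑ x ∈ univ.erase b, (x - b)⁻¹ = 0 := by
    -- the omitted term is `0⁻¹ = 0`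
    rw [sum_erase _ (by simp), sum_inv_sub_eq_zero b hK]
  rw [sum_congr rfl hdiv, sum_add_distrib, ← mul_sum, hinv, mul_zero, zero_add, sum_comm]
  calc ∑ l ∈ range n, ∑ x ∈ univ.erase b, x ^ l * b ^ (n - 1 - l)
      = ∑ l ∈ range n, -b ^ (n - 1) := sum_congr rfl fun l hl => by
        have hln := mem_range.mp hl
        rw [← sum_mul, sum_erase_pow_eq_neg b (by omega), neg_mul, ← pow_add,
          Nat.add_sub_of_le (by omega)]
    _ = -(n * b ^ (n - 1)) := by simp

end FiniteField

/-- Syndrome of the word $u(i,a)$ with coordinates $1/(α_j - α_i)$ for $j ≠ i$, $a$ in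
position $i$ and $0$ at $∞$: it equals $a c_{q+1-k}(α_i) - c'_{q+1-k}(α_i)$. -/
theorem stmt16 (F : Type*) [Field F] [Fintype F] [DecidableEq F] (k : ℕ)
    (h2 : 2 ≤ k) (h3 : k ≤ Fintype.card F - 3) (b a : F) :
    (PRSmat F (Fintype.card F + 1 - k)).mulVec
        (fun t : Option F => match t with
          | none => 0
          | some x => if x = b then a else (x - b)⁻¹) =
      a • PRScol F (Fintype.card F + 1 - k) (some b) -
        fun j : Fin (Fintype.card F + 1 - k) => ((j : ℕ) : F) * b ^ ((j : ℕ) - 1) := by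
  funext j
  have hj : (j : ℕ) < Fintype.card F := by omega
  have hoff : ∀ x ∈ univ.erase b, x ^ (j : ℕ) * (if x = b then a else (x - b)⁻¹) =
      x ^ (j : ℕ) * (x - b)⁻¹ := fun x hx => by rw [if_neg (ne_of_mem_erase hx)]
  simp only [mulVec, dotProduct, Fintype.sum_option, PRSmat, PRScol, of_apply, mul_zero,
    zero_add, Pi.sub_apply, Pi.smul_apply, smul_eq_mul]
  rw [← add_sum_erase _ _ (mem_univ b), if_pos rfl, sum_congr rfl hoff,
    FiniteField.sum_erase_pow_mul_inv_sub b (by omega) hj]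
  ring
end

section
/- Suppose q ≥ 5 and the covering radius of PRS(q-3) is 3. Then the number of deep hole classes of PRS(q-3), i.e., the number of points of P^3(F_q) not lying in the span of any 2 columns of G_4, equals (q^3 + 2q^2 + q)/2. -/
open Matrix Polynomial

section Aux

variable {F : Type*} [Field F] [Fintype F] [DecidableEq F]

lemma PRScol_ne_zero (t : Option F) : PRScol F 4 t ≠ 0 := by
  cases t with
  | none => intro h; have := congrFun h 3; simp [PRScol] at this
  | some a => intro h; have := congrFun h 0; simp [PRScol] at this

lemma detne_allfin (α : Fin 4 → F) (hα : Function.Injective α) :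
    (Matrix.of fun i j : Fin 4 => PRScol F 4 (some (α j)) i).det ≠ 0 := by
  have : (Matrix.of fun i j : Fin 4 => PRScol F 4 (some (α j)) i) = (Matrix.vandermonde α)ᵀ := by
    ext i j; simp [PRScol, Matrix.vandermonde]
  rw [this, Matrix.det_transpose, Matrix.det_vandermonde_ne_zero_iff]
  exact hα

lemma detne_inf (α : Fin 3 → F) (hα : Function.Injective α)
    (N : Matrix (Fin 4) (Fin 4) F)
    (hN3 : ∀ i, N i 3 = if (i : ℕ) = 3 then 1 else 0)
    (hNj : ∀ i, ∀ j : Fin 3, N i (Fin.castSucc j) = α j ^ (i : ℕ)) :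
    N.det ≠ 0 := by
  rw [Matrix.det_succ_column N 3]
  have h0 : ∀ i : Fin 4, i ≠ 3 → (-1 : F) ^ ((i : ℕ) + (3:Fin 4)) * N i 3 *
      (N.submatrix i.succAbove (Fin.succAbove 3)).det = 0 := by
    intro i hi
    have : N i 3 = 0 := by rw [hN3]; simp [Fin.ext_iff] at hi ⊢; omega
    simp [this]
  rw [Finset.sum_eq_single 3 (fun i _ hi => h0 i hi) (by simp)]
  have hsub : (N.submatrix (Fin.succAbove 3) (Fin.succAbove 3)) = (Matrix.vandermonde α)ᵀ := by
    ext i j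
    have h1 : Fin.succAbove 3 j = Fin.castSucc j := by
      simp [Fin.succAbove, Fin.lt_def, j.isLt]
    have h2 : Fin.succAbove 3 i = Fin.castSucc i := by
      simp [Fin.succAbove, Fin.lt_def, i.isLt]
    simp [Matrix.submatrix, h1, h2, hNj, Matrix.vandermonde]
  rw [hsub, hN3, Matrix.det_transpose]
  have := Matrix.det_vandermonde_ne_zero_iff.mpr hα
  have h3 : (((3:Fin 4) : ℕ)) = 3 := rfl
  rw [h3]
  norm_num
  exact this

lemma indep4 (t : Fin 4 → Option F) (ht : Function.Injective t) :
    LinearIndependent F (fun j => PRScol F 4 (t j)) := by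
  set M : Matrix (Fin 4) (Fin 4) F := Matrix.of fun i j => PRScol F 4 (t j) i with hM
  have hcols : (fun j => PRScol F 4 (t j)) = M.col := rfl
  rw [hcols, Matrix.linearIndependent_cols_iff_isUnit, Matrix.isUnit_iff_isUnit_det,
    isUnit_iff_ne_zero]
  by_cases hnone : ∃ k, t k = none
  · obtain ⟨k, hk⟩ := hnone
    set σ : Equiv.Perm (Fin 4) := Equiv.swap k 3 with hσ
    have hdet : (M.submatrix id σ).det = Equiv.Perm.sign σ * M.det :=
      Matrix.det_permute' σ M
    intro h
    rw [h] at hdet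
    simp only [mul_zero] at hdet
    set α : Fin 3 → F := fun j => (t (σ (Fin.castSucc j))).getD 0 with hα
    have hne : ∀ j : Fin 3, σ (Fin.castSucc j) ≠ k := by
      intro j hj
      have h3 : σ (3 : Fin 4) = k := by rw [hσ]; exact Equiv.swap_apply_right k 3
      have heq : Fin.castSucc j = (3 : Fin 4) := σ.injective (hj.trans h3.symm)
      have hv : ((Fin.castSucc j : Fin 4) : ℕ) = ((3 : Fin 4) : ℕ) := congrArg Fin.val heq
      rw [Fin.coe_castSucc] at hv
      have := j.isLt
      have : ((3 : Fin 4) : ℕ) = 3 := rfl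
      omega
    have hsome : ∀ j : Fin 3, t (σ (Fin.castSucc j)) = some (α j) := by
      intro j
      rcases h' : t (σ (Fin.castSucc j)) with _ | a
      · exact absurd (ht (h'.trans hk.symm)) (hne j)
      · simp [hα, h']
    have hinj : Function.Injective α := by
      intro j1 j2 hj
      have : t (σ (Fin.castSucc j1)) = t (σ (Fin.castSucc j2)) := by
        rw [hsome j1, hsome j2, hj]
      have := ht this
      have := σ.injective this
      exact Fin.castSucc_injective _ this
    refine detne_inf α hinj (M.submatrix id σ) ?_ ?_ hdet
    · intro i
      have : σ (3 : Fin 4) = k := by rw [hσ]; exact Equiv.swap_apply_right k 3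
      simp only [Matrix.submatrix_apply, id, this, hM, Matrix.of_apply, hk, PRScol]
    · intro i j
      simp only [Matrix.submatrix_apply, id, hM, Matrix.of_apply, hsome j, PRScol]
  · push_neg at hnone
    set α : Fin 4 → F := fun j => (t j).getD 0 with hα
    have hsome : ∀ j, t j = some (α j) := by
      intro j
      rcases h' : t j with _ | a
      · exact absurd h' (hnone j)
      · simp [hα, h']
    have hinj : Function.Injective α := by
      intro j1 j2 hj
      apply ht; rw [hsome j1, hsome j2, hj]
    have : M = Matrix.of fun i j : Fin 4 => PRScol F 4 (some (α j)) i := by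
      ext i j; rw [hM]; simp only [Matrix.of_apply, hsome j]
    rw [this]
    exact detne_allfin α hinj

lemma exists_not_mem {n : ℕ} (hq : 5 ≤ Fintype.card F) (t : Fin n → Option F) (hn : n ≤ 4) :
    ∃ x : Option F, x ∉ Set.range t := by
  by_contra h
  push_neg at h
  have hsurj : Function.Surjective t := fun x => h x
  have := Fintype.card_le_of_surjective t hsurj
  simp only [Fintype.card_fin, Fintype.card_option] at this
  omega

lemma indep_le4 {n : ℕ} (hq : 5 ≤ Fintype.card F) (hn : n ≤ 4) (t : Fin n → Option F)
    (ht : Function.Injective t) : LinearIndependent F (fun j => PRScol F 4 (t j)) := by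
  obtain ⟨d, hd⟩ : ∃ d, n + d = 4 := ⟨4 - n, by omega⟩
  clear hn
  induction d generalizing n t with
  | zero =>
    have : n = 4 := by omega
    subst this
    exact indep4 t ht
  | succ d ih =>
    obtain ⟨x, hx⟩ := exists_not_mem hq t (by omega)
    have hinj : Function.Injective (Fin.snoc t x : Fin (n+1) → Option F) := by
      intro j1 j2 hj
      rcases Fin.eq_castSucc_or_eq_last j1 with ⟨j1', rfl⟩ | rfl <;>
        rcases Fin.eq_castSucc_or_eq_last j2 with ⟨j2', rfl⟩ | rfl
      · simp only [Fin.snoc_castSucc] at hj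
        exact congrArg Fin.castSucc (ht hj)
      · simp only [Fin.snoc_castSucc, Fin.snoc_last] at hj
        exact absurd ⟨j1', hj⟩ hx
      · simp only [Fin.snoc_castSucc, Fin.snoc_last] at hj
        exact absurd ⟨j2', hj.symm⟩ hx
      · rfl
    have hli := ih (Fin.snoc t x) hinj (by omega)
    have h2 := hli.comp Fin.castSucc (Fin.castSucc_injective n)
    have heq : ((fun j => PRScol F 4 ((Fin.snoc t x : Fin (n+1) → Option F) j)) ∘ Fin.castSucc) =
        fun j => PRScol F 4 (t j) := by
      funext j; simp [Function.comp, Fin.snoc_castSucc]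
    rwa [heq] at h2

lemma inj2 {t1 t2 : Option F} (h : t1 ≠ t2) : Function.Injective ![t1, t2] := by
  intro a b hab
  fin_cases a <;> fin_cases b <;> simp_all

lemma inj3 {t1 t2 t3 : Option F} (h12 : t1 ≠ t2) (h13 : t1 ≠ t3) (h23 : t2 ≠ t3) :
    Function.Injective ![t1, t2, t3] := by
  intro a b hab
  fin_cases a <;> fin_cases b <;> simp_all

lemma inj4 {t1 t2 t3 t4 : Option F} (h12 : t1 ≠ t2) (h13 : t1 ≠ t3) (h14 : t1 ≠ t4)
    (h23 : t2 ≠ t3) (h24 : t2 ≠ t4) (h34 : t3 ≠ t4) :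
    Function.Injective ![t1, t2, t3, t4] := by
  intro a b hab
  fin_cases a <;> fin_cases b <;> simp_all

lemma span_inter_left (hq : 5 ≤ Fintype.card F) {t1 t2 t3 : Option F}
    (h12 : t1 ≠ t2) (h13 : t1 ≠ t3) (h23 : t2 ≠ t3) {v : Fin 4 → F}
    (hv1 : v ∈ Submodule.span F ({PRScol F 4 t1, PRScol F 4 t2} : Set (Fin 4 → F)))
    (hv2 : v ∈ Submodule.span F ({PRScol F 4 t1, PRScol F 4 t3} : Set (Fin 4 → F))) :
    v ∈ Submodule.span F ({PRScol F 4 t1} : Set (Fin 4 → F)) := by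
  rw [Submodule.mem_span_pair] at hv1 hv2
  obtain ⟨x, y, hxy⟩ := hv1
  obtain ⟨z, w, hzw⟩ := hv2
  have hli := indep_le4 hq (by norm_num) ![t1, t2, t3] (inj3 h12 h13 h23)
  rw [Fintype.linearIndependent_iff] at hli
  have hsum : ∑ i, (![x - z, y, -w] i) • PRScol F 4 (![t1, t2, t3] i) = 0 := by
    rw [Fin.sum_univ_three]
    simp only [Matrix.cons_val_zero, Matrix.cons_val_one, Matrix.head_cons,
      Matrix.cons_val_two, Matrix.tail_cons]
    have : (x - z) • PRScol F 4 t1 + y • PRScol F 4 t2 + (-w) • PRScol F 4 t3 =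
        (x • PRScol F 4 t1 + y • PRScol F 4 t2) - (z • PRScol F 4 t1 + w • PRScol F 4 t3) := by
      module
    rw [this, hxy, hzw, sub_self]
  have hy : y = 0 := by have := hli _ hsum 1; simpa using this
  rw [Submodule.mem_span_singleton]
  exact ⟨x, by rw [← hxy, hy, zero_smul, add_zero]⟩

lemma span_inter_disj (hq : 5 ≤ Fintype.card F) {t1 t2 t3 t4 : Option F}
    (h12 : t1 ≠ t2) (h13 : t1 ≠ t3) (h14 : t1 ≠ t4)
    (h23 : t2 ≠ t3) (h24 : t2 ≠ t4) (h34 : t3 ≠ t4) {v : Fin 4 → F}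
    (hv1 : v ∈ Submodule.span F ({PRScol F 4 t1, PRScol F 4 t2} : Set (Fin 4 → F)))
    (hv2 : v ∈ Submodule.span F ({PRScol F 4 t3, PRScol F 4 t4} : Set (Fin 4 → F)))
    : v = 0 := by
  rw [Submodule.mem_span_pair] at hv1 hv2
  obtain ⟨x, y, hxy⟩ := hv1
  obtain ⟨z, w, hzw⟩ := hv2
  have hli := indep_le4 hq (by norm_num) ![t1, t2, t3, t4] (inj4 h12 h13 h14 h23 h24 h34)
  rw [Fintype.linearIndependent_iff] at hli
  have hsum : ∑ i, (![x, y, -z, -w] i) • PRScol F 4 (![t1, t2, t3, t4] i) = 0 := by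
    rw [Fin.sum_univ_four]
    simp only [Matrix.cons_val_zero, Matrix.cons_val_one, Matrix.head_cons,
      Matrix.cons_val_two, Matrix.tail_cons, Matrix.cons_val_three]
    have : x • PRScol F 4 t1 + y • PRScol F 4 t2 + (-z) • PRScol F 4 t3 + (-w) • PRScol F 4 t4 =
        (x • PRScol F 4 t1 + y • PRScol F 4 t2) - (z • PRScol F 4 t3 + w • PRScol F 4 t4) := by
      module
    rw [this, hxy, hzw, sub_self]
  have hx : x = 0 := by have := hli _ hsum 0; simpa using this
  have hy : y = 0 := by have := hli _ hsum 1; simpa using this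
  rw [← hxy, hx, hy, zero_smul, zero_smul, add_zero]


lemma ncard_biUnion {α β : Type*} (s : Finset α) (f : α → Set β)
    (hfin : ∀ a ∈ s, (f a).Finite)
    (hdisj : ∀ a ∈ s, ∀ b ∈ s, a ≠ b → Disjoint (f a) (f b)) :
    (⋃ a ∈ s, f a).ncard = ∑ a ∈ s, (f a).ncard := by
  classical
  induction s using Finset.induction with
  | empty => simp
  | @insert a s ha ih =>
    rw [Finset.set_biUnion_insert, Finset.sum_insert ha]
    rw [Set.ncard_union_eq ?disj (hfin a (Finset.mem_insert_self a s)) ?fin2]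
    · rw [ih (fun b hb => hfin b (Finset.mem_insert_of_mem hb))
        (fun b hb c hc hbc => hdisj b (Finset.mem_insert_of_mem hb)
          c (Finset.mem_insert_of_mem hc) hbc)]
    case disj =>
      rw [Set.disjoint_iUnion_right]
      intro b
      rw [Set.disjoint_iUnion_right]
      intro hb
      exact hdisj a (Finset.mem_insert_self a s) b (Finset.mem_insert_of_mem hb)
        (fun h => ha (h ▸ hb))
    case fin2 =>
      apply Set.Finite.biUnion (Finset.finite_toSet s)
      exact fun b hb => hfin b (Finset.mem_insert_of_mem hb)

lemma ncard_span_singleton {v : Fin 4 → F} (hv : v ≠ 0) :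
    ((Submodule.span F ({v} : Set (Fin 4 → F))) : Set (Fin 4 → F)).ncard = Fintype.card F := by
  rw [Submodule.span_singleton_eq_range]
  rw [← Nat.card_coe_set_eq, Nat.card_range_of_injective (smul_left_injective F hv),
    Nat.card_eq_fintype_card]

lemma ncard_span_pair {a b : Fin 4 → F} (h : LinearIndependent F ![a, b]) :
    ((Submodule.span F ({a, b} : Set (Fin 4 → F))) : Set (Fin 4 → F)).ncard =
      Fintype.card F ^ 2 := by
  have hrange : Set.range ![a, b] = {a, b} := by
    ext x
    simp [Fin.exists_fin_two]
    tauto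
  have hfr : Module.finrank F (Submodule.span F ({a, b} : Set (Fin 4 → F))) = 2 := by
    rw [← hrange, finrank_span_eq_card h, Fintype.card_fin]
  haveI : Fintype (Submodule.span F ({a, b} : Set (Fin 4 → F))) := Fintype.ofFinite _
  rw [← Nat.card_coe_set_eq]
  have := Module.card_eq_pow_finrank (K := F) (V := (Submodule.span F ({a, b} : Set (Fin 4 → F))))
  rw [SetLike.coe_sort_coe, Nat.card_eq_fintype_card, this, hfr]

lemma span_singleton_inter (hq : 5 ≤ Fintype.card F) {t1 t2 : Option F} (h : t1 ≠ t2)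
    {v : Fin 4 → F} (h1 : v ∈ Submodule.span F ({PRScol F 4 t1} : Set (Fin 4 → F)))
    (h2 : v ∈ Submodule.span F ({PRScol F 4 t2} : Set (Fin 4 → F))) : v = 0 := by
  rw [Submodule.mem_span_singleton] at h1 h2
  obtain ⟨x, hx⟩ := h1
  obtain ⟨y, hy⟩ := h2
  have hli := indep_le4 hq (by norm_num) ![t1, t2] (inj2 h)
  rw [Fintype.linearIndependent_iff] at hli
  have hsum : ∑ i, (![x, -y] i) • PRScol F 4 (![t1, t2] i) = 0 := by
    rw [Fin.sum_univ_two]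
    simp only [Matrix.cons_val_zero, Matrix.cons_val_one, Matrix.head_cons]
    rw [neg_smul, hx, hy, add_neg_cancel]
  have hx0 : x = 0 := by have := hli _ hsum 0; simpa using this
  rw [← hx, hx0, zero_smul]

lemma mem_single_and_pair (hq : 5 ≤ Fintype.card F) {t t1 t2 : Option F}
    (ht1 : t ≠ t1) (ht2 : t ≠ t2) (h12 : t1 ≠ t2) {v : Fin 4 → F}
    (h1 : v ∈ Submodule.span F ({PRScol F 4 t} : Set (Fin 4 → F)))
    (h2 : v ∈ Submodule.span F ({PRScol F 4 t1, PRScol F 4 t2} : Set (Fin 4 → F))) : v = 0 := by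
  rw [Submodule.mem_span_singleton] at h1
  rw [Submodule.mem_span_pair] at h2
  obtain ⟨a, ha⟩ := h1
  obtain ⟨x, y, hxy⟩ := h2
  have hli := indep_le4 hq (by norm_num) ![t, t1, t2] (inj3 ht1 ht2 h12)
  rw [Fintype.linearIndependent_iff] at hli
  have hsum : ∑ i, (![a, -x, -y] i) • PRScol F 4 (![t, t1, t2] i) = 0 := by
    rw [Fin.sum_univ_three]
    simp only [Matrix.cons_val_zero, Matrix.cons_val_one, Matrix.head_cons,
      Matrix.cons_val_two, Matrix.tail_cons]
    have : a • PRScol F 4 t + (-x) • PRScol F 4 t1 + (-y) • PRScol F 4 t2 =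
        a • PRScol F 4 t - (x • PRScol F 4 t1 + y • PRScol F 4 t2) := by module
    rw [this, ha, hxy, sub_self]
  have ha0 : a = 0 := by have := hli _ hsum 0; simpa using this
  rw [← ha, ha0, zero_smul]

def SpS (F : Type*) [Field F] (t1 t2 : Option F) : Set (Fin 4 → F) :=
  ↑(Submodule.span F ({PRScol F 4 t1, PRScol F 4 t2} : Set (Fin 4 → F)))

def ColsS (F : Type*) [Field F] : Set (Fin 4 → F) :=
  ⋃ t : Option F, ↑(Submodule.span F ({PRScol F 4 t} : Set (Fin 4 → F)))

lemma zero_mem_ColsS : (0 : Fin 4 → F) ∈ ColsS F := by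
  apply Set.mem_iUnion.2 ⟨none, ?_⟩
  exact Submodule.zero_mem _

lemma single_subset_ColsS (t : Option F) :
    (↑(Submodule.span F ({PRScol F 4 t} : Set (Fin 4 → F))) : Set (Fin 4 → F)) ⊆ ColsS F :=
  Set.subset_iUnion (fun t : Option F =>
    (↑(Submodule.span F ({PRScol F 4 t} : Set (Fin 4 → F))) : Set (Fin 4 → F))) t

lemma ncard_ColsS (hq : 5 ≤ Fintype.card F) :
    (ColsS F).ncard = (Fintype.card F + 1) * (Fintype.card F - 1) + 1 := by
  classical
  set q := Fintype.card F with hqdef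
  set Cols' : Set (Fin 4 → F) :=
    ⋃ t ∈ (Finset.univ : Finset (Option F)),
      ((↑(Submodule.span F ({PRScol F 4 t} : Set (Fin 4 → F))) : Set (Fin 4 → F)) \ {0}) with hC'
  have h1 : ColsS F = insert 0 Cols' := by
    ext v
    simp only [ColsS, Set.mem_iUnion, Set.mem_insert_iff, hC', Finset.mem_univ,
      Set.iUnion_true, Set.mem_diff, Set.mem_singleton_iff]
    constructor
    · rintro ⟨t, ht⟩
      by_cases hv : v = 0
      · exact Or.inl hv
      · exact Or.inr ⟨t, ht, hv⟩
    · rintro (rfl | ⟨t, ht, _⟩)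
      · exact ⟨none, Submodule.zero_mem _⟩
      · exact ⟨t, ht⟩
  have h0 : (0 : Fin 4 → F) ∉ Cols' := by
    simp [hC']
  have h2 : Cols'.ncard = ∑ t : Option F, (q - 1) := by
    rw [hC', ncard_biUnion]
    · apply Finset.sum_congr rfl
      intro t _
      rw [Set.ncard_diff_singleton_of_mem (Submodule.zero_mem _),
        ncard_span_singleton (PRScol_ne_zero t)]
    · intro t _; exact Set.toFinite _
    · intro t1 _ t2 _ hne
      rw [Set.disjoint_left]
      rintro v ⟨hv1, hv0⟩ ⟨hv2, _⟩
      exact hv0 (span_singleton_inter hq hne hv1 hv2)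
  rw [h1, Set.ncard_insert_of_notMem h0 (Set.toFinite _), h2]
  simp [Fintype.card_option, mul_comm, hqdef]

lemma indepPair (hq : 5 ≤ Fintype.card F) {t1 t2 : Option F} (h : t1 ≠ t2) :
    LinearIndependent F ![PRScol F 4 t1, PRScol F 4 t2] := by
  have := indep_le4 hq (by norm_num) ![t1, t2] (inj2 h)
  have heq : (fun j => PRScol F 4 (![t1, t2] j)) = ![PRScol F 4 t1, PRScol F 4 t2] := by
    funext j; fin_cases j <;> rfl
  rwa [heq] at this

lemma ncard_SpS (hq : 5 ≤ Fintype.card F) {t1 t2 : Option F} (h : t1 ≠ t2) :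
    (SpS F t1 t2).ncard = Fintype.card F ^ 2 :=
  ncard_span_pair (indepPair hq h)

lemma SpS_inter_ColsS (hq : 5 ≤ Fintype.card F) {t1 t2 : Option F} (h : t1 ≠ t2) :
    SpS F t1 t2 ∩ ColsS F =
      (↑(Submodule.span F ({PRScol F 4 t1} : Set (Fin 4 → F))) : Set (Fin 4 → F)) ∪
      ↑(Submodule.span F ({PRScol F 4 t2} : Set (Fin 4 → F))) := by
  ext v
  constructor
  · rintro ⟨hvs, hvc⟩
    obtain ⟨s, ⟨t, rfl⟩, hvt⟩ := hvc
    by_cases ht1 : t = t1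
    · subst ht1; exact Or.inl hvt
    by_cases ht2 : t = t2
    · subst ht2; exact Or.inr hvt
    · left
      have := mem_single_and_pair hq ht1 ht2 h hvt hvs
      rw [this]
      exact Submodule.zero_mem _
  · rintro (hv | hv)
    · exact ⟨Submodule.span_mono (Set.singleton_subset_iff.2 (Set.mem_insert _ _)) hv,
        single_subset_ColsS t1 hv⟩
    · refine ⟨Submodule.span_mono ?_ hv, single_subset_ColsS t2 hv⟩
      intro x hx
      rw [Set.mem_singleton_iff] at hx
      rw [hx]
      exact Set.mem_insert_of_mem _ rfl

lemma ncard_SpS_inter_ColsS (hq : 5 ≤ Fintype.card F) {t1 t2 : Option F} (h : t1 ≠ t2) :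
    (SpS F t1 t2 ∩ ColsS F).ncard = 2 * Fintype.card F - 1 := by
  rw [SpS_inter_ColsS hq h]
  have hint : (↑(Submodule.span F ({PRScol F 4 t1} : Set (Fin 4 → F))) : Set (Fin 4 → F)) ∩
      ↑(Submodule.span F ({PRScol F 4 t2} : Set (Fin 4 → F))) = {0} := by
    ext v
    constructor
    · rintro ⟨h1, h2⟩
      exact span_singleton_inter hq h h1 h2
    · rintro rfl
      exact ⟨Submodule.zero_mem _, Submodule.zero_mem _⟩
  have := Set.ncard_union_add_ncard_inter
    (↑(Submodule.span F ({PRScol F 4 t1} : Set (Fin 4 → F))) : Set (Fin 4 → F))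
    (↑(Submodule.span F ({PRScol F 4 t2} : Set (Fin 4 → F))) : Set (Fin 4 → F))
    (Set.toFinite _) (Set.toFinite _)
  rw [hint, Set.ncard_singleton, ncard_span_singleton (PRScol_ne_zero t1),
    ncard_span_singleton (PRScol_ne_zero t2)] at this
  omega

lemma ncard_SpS_diff_ColsS (hq : 5 ≤ Fintype.card F) {t1 t2 : Option F} (h : t1 ≠ t2) :
    (SpS F t1 t2 \ ColsS F).ncard + (2 * Fintype.card F - 1) = Fintype.card F ^ 2 := by
  have := Set.ncard_inter_add_ncard_diff_eq_ncard (SpS F t1 t2) (ColsS F) (Set.toFinite _)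
  rw [ncard_SpS_inter_ColsS hq h, ncard_SpS hq h] at this
  omega

lemma pairs_card_two (n : ℕ) :
    ((Finset.univ : Finset (Fin n × Fin n)).filter (fun p => p.1 < p.2)).card * 2 =
      n * (n - 1) := by
  classical
  rw [Finset.card_filter]
  rw [← Finset.univ_product_univ, Finset.sum_product_right]
  have hinner : ∀ j : Fin n, (∑ i : Fin n, if (i, j).1 < (i, j).2 then 1 else 0) = (j : ℕ) := by
    intro j
    rw [← Finset.card_filter]
    have : (Finset.univ.filter (fun i : Fin n => (i, j).1 < (i, j).2)) = Finset.Iio j := by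
      ext i; simp [Finset.mem_Iio]
    rw [this, Fin.card_Iio]
  rw [Finset.sum_congr rfl (fun j _ => hinner j)]
  rw [Fin.sum_univ_eq_sum_range (fun i => i) n]
  exact Finset.sum_range_id_mul_two n

lemma pieces_disjoint (hq : 5 ≤ Fintype.card F) {t1 t2 t3 t4 : Option F}
    (h12 : t1 ≠ t2) (h34 : t3 ≠ t4)
    (hA : ¬(t1 = t3 ∧ t2 = t4)) (hB : ¬(t1 = t4 ∧ t2 = t3)) :
    Disjoint (SpS F t1 t2 \ ColsS F) (SpS F t3 t4 \ ColsS F) := by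
  rw [Set.disjoint_left]
  rintro v ⟨hv1, hvc⟩ ⟨hv2, -⟩
  apply hvc
  have hpair_comm : ∀ a b : Option F, SpS F a b = SpS F b a := by
    intro a b
    unfold SpS
    rw [Set.pair_comm]
  by_cases h13 : t1 = t3
  · have h24 : t2 ≠ t4 := fun h => hA ⟨h13, h⟩
    subst h13
    have h14 : t1 ≠ t4 := h34
    exact single_subset_ColsS t1 (span_inter_left hq h12 h14 h24 hv1 hv2)
  by_cases h14 : t1 = t4
  · have h23 : t2 ≠ t3 := fun h => hB ⟨h14, h⟩
    subst h14
    rw [hpair_comm t3 t1] at hv2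
    exact single_subset_ColsS t1
      (span_inter_left hq h12 (Ne.symm h34) h23 hv1 hv2)
  by_cases h23 : t2 = t3
  · subst h23
    have h24 : t2 ≠ t4 := h34
    rw [hpair_comm t1 t2] at hv1
    exact single_subset_ColsS t2
      (span_inter_left hq (Ne.symm h12) h24 (fun h => h14 h) hv1 hv2)
  by_cases h24 : t2 = t4
  · subst h24
    rw [hpair_comm t1 t2] at hv1
    rw [hpair_comm t3 t2] at hv2
    exact single_subset_ColsS t2
      (span_inter_left hq (Ne.symm h12) (Ne.symm h34) (fun h => h13 h) hv1 hv2)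
  · have := span_inter_disj hq h12 h13 h14 h23 h24 h34 hv1 hv2
    rw [this]
    exact zero_mem_ColsS

lemma count_goodV (hq : 5 ≤ Fintype.card F) :
    {v : Fin 4 → F | ∀ t1 t2 : Option F,
        v ∉ Submodule.span F ({PRScol F 4 t1, PRScol F 4 t2} : Set (Fin 4 → F))}.ncard * 2 =
      (Fintype.card F - 1) *
        (Fintype.card F ^ 3 + 2 * Fintype.card F ^ 2 + Fintype.card F) := by
  classical
  set q := Fintype.card F with hqdef
  obtain ⟨r, hr⟩ : ∃ r, q = r + 1 := ⟨q - 1, by omega⟩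
  set e : Fin (Fintype.card (Option F)) → Option F := ⇑(Fintype.equivFin (Option F)).symm with he
  have hecard : Fintype.card (Option F) = q + 1 := by simp [Fintype.card_option, hqdef]
  set pairs : Finset (Fin (Fintype.card (Option F)) × Fin (Fintype.card (Option F))) :=
    (Finset.univ.filter (fun p => p.1 < p.2)) with hpairs
  set D : Set (Fin 4 → F) := ⋃ p ∈ pairs, (SpS F (e p.1) (e p.2) \ ColsS F) with hD
  set BadV : Set (Fin 4 → F) := ⋃ t1 : Option F, ⋃ t2 : Option F, SpS F t1 t2 with hBad
  have einj : Function.Injective e := (Fintype.equivFin (Option F)).symm.injective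
  -- BadV = Cols ∪ D
  have hBadEq : BadV = ColsS F ∪ D := by
    apply Set.Subset.antisymm
    · rintro v hv
      rw [hBad, Set.mem_iUnion] at hv
      obtain ⟨t1, hv⟩ := hv
      rw [Set.mem_iUnion] at hv
      obtain ⟨t2, hv⟩ := hv
      by_cases hvc : v ∈ ColsS F
      · exact Or.inl hvc
      have h12 : t1 ≠ t2 := by
        rintro rfl
        apply hvc
        apply single_subset_ColsS t1
        have : ({PRScol F 4 t1, PRScol F 4 t1} : Set (Fin 4 → F)) = {PRScol F 4 t1} := by
          simp
        rw [SpS, this] at hv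
        exact hv
      right
      set i := (Fintype.equivFin (Option F)) t1 with hi
      set j := (Fintype.equivFin (Option F)) t2 with hj
      have hei : e i = t1 := Equiv.symm_apply_apply _ _
      have hej : e j = t2 := Equiv.symm_apply_apply _ _
      have hij : i ≠ j := by
        intro h
        exact h12 (by rw [← hei, ← hej, h])
      rcases lt_or_gt_of_ne hij with hlt | hgt
      · rw [hD, Set.mem_iUnion]
        refine ⟨(i, j), ?_⟩
        rw [Set.mem_iUnion]
        refine ⟨by simp [hpairs, hlt], ?_⟩
        rw [hei, hej]
        exact ⟨hv, hvc⟩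
      · rw [hD, Set.mem_iUnion]
        refine ⟨(j, i), ?_⟩
        rw [Set.mem_iUnion]
        refine ⟨by simp [hpairs, hgt], ?_⟩
        rw [hei, hej]
        refine ⟨?_, hvc⟩
        rw [SpS, Set.pair_comm]
        exact hv
    · apply Set.union_subset
      · rintro v hv
        obtain ⟨s, ⟨t, rfl⟩, hvt⟩ := hv
        rw [hBad, Set.mem_iUnion]
        refine ⟨t, Set.mem_iUnion.2 ⟨t, ?_⟩⟩
        exact Submodule.span_mono (Set.singleton_subset_iff.2 (Set.mem_insert _ _)) hvt
      · rintro v hv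
        rw [hD, Set.mem_iUnion] at hv
        obtain ⟨p, hv⟩ := hv
        rw [Set.mem_iUnion] at hv
        obtain ⟨-, hv, -⟩ := hv
        rw [hBad, Set.mem_iUnion]
        exact ⟨e p.1, Set.mem_iUnion.2 ⟨e p.2, hv⟩⟩
  -- cardinality of D
  have hKcard : ∀ p ∈ pairs, (SpS F (e p.1) (e p.2) \ ColsS F).ncard = r * r := by
    intro p hp
    have hplt : p.1 < p.2 := by
      rw [hpairs] at hp
      simpa using hp
    have hne : e p.1 ≠ e p.2 := fun h => (ne_of_lt hplt) (einj h)
    have := ncard_SpS_diff_ColsS hq hne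
    have h2q : 2 * q - 1 = 2 * r + 1 := by omega
    have hq2 : q ^ 2 = r * r + (2 * r + 1) := by rw [hr]; ring
    rw [h2q, hq2] at this
    omega
  have hDcard : D.ncard = pairs.card * (r * r) := by
    rw [hD, ncard_biUnion]
    · rw [Finset.sum_congr rfl hKcard, Finset.sum_const, smul_eq_mul]
    · intro p _; exact Set.toFinite _
    · intro p hp p' hp' hne
      have hplt : p.1 < p.2 := by rw [hpairs] at hp; simpa using hp
      have hplt' : p'.1 < p'.2 := by rw [hpairs] at hp'; simpa using hp'
      apply pieces_disjoint hq
      · exact fun h => (ne_of_lt hplt) (einj h)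
      · exact fun h => (ne_of_lt hplt') (einj h)
      · rintro ⟨h1, h2⟩
        exact hne (Prod.ext (einj h1) (einj h2))
      · rintro ⟨h1, h2⟩
        have e1 : p.1 = p'.2 := einj h1
        have e2 : p.2 = p'.1 := einj h2
        rw [e1, e2] at hplt
        exact absurd (hplt.trans hplt') (lt_irrefl _)
  -- cardinality of BadV
  have hColsD : Disjoint (ColsS F) D := by
    rw [Set.disjoint_right]
    intro v hv
    rw [hD, Set.mem_iUnion] at hv
    obtain ⟨p, hv⟩ := hv
    rw [Set.mem_iUnion] at hv
    obtain ⟨-, -, hv⟩ := hv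
    exact hv
  have hBadCard : BadV.ncard = ((q + 1) * (q - 1) + 1) + pairs.card * (r * r) := by
    rw [hBadEq, Set.ncard_union_eq hColsD (Set.toFinite _) (Set.toFinite _),
      ncard_ColsS hq, hDcard]
  -- complement
  have hcompl : BadV.ncard + BadVᶜ.ncard = q ^ 4 := by
    have := Set.ncard_add_ncard_compl BadV (Set.toFinite _) (Set.toFinite _)
    rw [this]
    rw [Nat.card_eq_fintype_card]
    simp [hqdef]
  have hGoodEq : {v : Fin 4 → F | ∀ t1 t2 : Option F,
      v ∉ Submodule.span F ({PRScol F 4 t1, PRScol F 4 t2} : Set (Fin 4 → F))} = BadVᶜ := by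
    ext v
    simp only [Set.mem_setOf_eq, Set.mem_compl_iff, hBad, Set.mem_iUnion, not_exists]
    rfl
  rw [hGoodEq]
  -- arithmetic
  have hp2 : pairs.card * 2 = (q + 1) * q := by
    rw [hpairs, pairs_card_two, hecard, Nat.add_sub_cancel]
  have hq1 : q - 1 = r := by omega
  have key : 2 * ((q + 1) * r + 1) + (q + 1) * q * (r * r) + r * (q ^ 3 + 2 * q ^ 2 + q) =
      2 * q ^ 4 := by rw [hr]; ring
  have hB2 : BadV.ncard * 2 = 2 * ((q + 1) * r + 1) + (q + 1) * q * (r * r) := by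
    rw [hBadCard, hq1]
    have : ((q + 1) * r + 1 + pairs.card * (r * r)) * 2 =
        2 * ((q + 1) * r + 1) + (pairs.card * 2) * (r * r) := by ring
    rw [this, hp2]
  have hG2 : BadVᶜ.ncard * 2 + BadV.ncard * 2 = 2 * q ^ 4 := by omega
  rw [hB2] at hG2
  rw [hq1]
  omega

theorem stmt18' (hq : 5 ≤ Fintype.card F) :
    Set.ncard {y : Projectivization F (Fin 4 → F) |
        ∀ t₁ t₂ : Option F,
          y.rep ∉ Submodule.span F ({PRScol F 4 t₁, PRScol F 4 t₂} : Set (Fin 4 → F))} =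
      (Fintype.card F ^ 3 + 2 * Fintype.card F ^ 2 + Fintype.card F) / 2 := by
  classical
  set q := Fintype.card F with hqdef
  set GoodV : Set (Fin 4 → F) := {v : Fin 4 → F | ∀ t1 t2 : Option F,
      v ∉ Submodule.span F ({PRScol F 4 t1, PRScol F 4 t2} : Set (Fin 4 → F))} with hGV
  set G : Set (Projectivization F (Fin 4 → F)) := {y : Projectivization F (Fin 4 → F) |
      ∀ t₁ t₂ : Option F,
        y.rep ∉ Submodule.span F ({PRScol F 4 t₁, PRScol F 4 t₂} : Set (Fin 4 → F))} with hG
  haveI : Finite (Projectivization F (Fin 4 → F)) := Quotient.finite _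
  have hGfin : G.Finite := Set.toFinite _
  -- smul invariance of GoodV
  have hsmul : ∀ (a : Fˣ) (v : Fin 4 → F), v ∈ GoodV → (a : F) • v ∈ GoodV := by
    intro a v hv t1 t2 hmem
    apply hv t1 t2
    exact (Submodule.smul_mem_iff' (G := Fˣ) _ a).1 hmem
  have hsmul' : ∀ (a : Fˣ) (v : Fin 4 → F), (a : F) • v ∈ GoodV → v ∈ GoodV := by
    intro a v hv
    have := hsmul a⁻¹ _ hv
    rwa [smul_smul, Units.inv_mul, one_smul] at this
  have hGV0 : ∀ v ∈ GoodV, v ≠ 0 := by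
    intro v hv h0
    exact hv none none (h0 ▸ Submodule.zero_mem _)
  -- GoodV as union of fibers
  have hUnion : GoodV = ⋃ y ∈ hGfin.toFinset, {v : Fin 4 → F | ∃ a : Fˣ, v = (a : F) • y.rep} := by
    ext v
    simp only [Set.mem_iUnion, Set.Finite.mem_toFinset, Set.mem_setOf_eq]
    constructor
    · intro hv
      have hv0 : v ≠ 0 := hGV0 v hv
      set y := Projectivization.mk F v hv0 with hy
      have hmk : Projectivization.mk F y.rep y.rep_nonzero = Projectivization.mk F v hv0 := by
        rw [Projectivization.mk_rep]
      rw [Projectivization.mk_eq_mk_iff] at hmk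
      obtain ⟨a, ha⟩ := hmk
      have hrep : y.rep = (a : F) • v := by rw [← ha]; rfl
      have hyG : y ∈ G := by
        intro t1 t2
        have : y.rep ∈ GoodV := hrep ▸ hsmul a v hv
        exact this t1 t2
      refine ⟨y, hyG, a⁻¹, ?_⟩
      rw [hrep, smul_smul]
      norm_num
    · rintro ⟨y, hyG, a, rfl⟩
      exact hsmul a y.rep hyG
  -- fibers have cardinality q - 1
  have hfib : ∀ y : Projectivization F (Fin 4 → F),
      {v : Fin 4 → F | ∃ a : Fˣ, v = (a : F) • y.rep}.ncard = q - 1 := by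
    intro y
    have hrange : {v : Fin 4 → F | ∃ a : Fˣ, v = (a : F) • y.rep} =
        Set.range (fun a : Fˣ => (a : F) • y.rep) := by
      ext v; simp [eq_comm]
    rw [hrange, ← Nat.card_coe_set_eq,
      Nat.card_range_of_injective (f := fun a : Fˣ => (a : F) • y.rep) ?_,
      Nat.card_eq_fintype_card, Fintype.card_units]
    intro a b hab
    have := smul_left_injective F y.rep_nonzero hab
    exact Units.ext this
  -- fibers are disjoint
  have hdisj : ∀ y ∈ hGfin.toFinset, ∀ y' ∈ hGfin.toFinset, y ≠ y' →
      Disjoint {v : Fin 4 → F | ∃ a : Fˣ, v = (a : F) • y.rep}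
        {v : Fin 4 → F | ∃ a : Fˣ, v = (a : F) • y'.rep} := by
    intro y _ y' _ hne
    rw [Set.disjoint_left]
    rintro v ⟨a, rfl⟩ ⟨b, hb⟩
    apply hne
    have hyy : (b⁻¹ * a : Fˣ) • y.rep = y'.rep := by
      have : ((b⁻¹ * a : Fˣ) : F) • y.rep = y'.rep := by
        rw [Units.val_mul, mul_smul, hb, smul_smul]
        simp
      exact this
    have := (Projectivization.mk_eq_mk_iff F y'.rep y.rep y'.rep_nonzero y.rep_nonzero).2
      ⟨b⁻¹ * a, hyy⟩
    rw [Projectivization.mk_rep, Projectivization.mk_rep] at this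
    exact this.symm
  -- count
  have hGVcard : GoodV.ncard = G.ncard * (q - 1) := by
    rw [hUnion, ncard_biUnion _ _ (fun y _ => Set.toFinite _) hdisj]
    rw [Finset.sum_congr rfl (fun y _ => hfib y), Finset.sum_const, smul_eq_mul,
      Set.ncard_eq_toFinset_card G hGfin]
  have hcount := count_goodV hq
  rw [← hGV] at hcount
  rw [hGVcard] at hcount
  have hkey : (q - 1) * (G.ncard * 2) = (q - 1) * (q ^ 3 + 2 * q ^ 2 + q) := by
    rw [← hcount]; ring
  have hq1 : 0 < q - 1 := by omega
  have hfinal : G.ncard * 2 = q ^ 3 + 2 * q ^ 2 + q :=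
    Nat.eq_of_mul_eq_mul_left hq1 hkey
  rw [← hfinal, Nat.mul_div_cancel _ (by norm_num)]

end Aux

/-- If $q ≥ 5$ and $ρ(PRS(q-3)) = 3$, the number of deep hole classes of $PRS(q-3)$,
i.e. the number of points of $P^3(F_q)$ not in the span of any two columns of $G_4$,
is $(q^3+2q^2+q)/2$. -/
theorem stmt18 (F : Type*) [Field F] [Fintype F] [DecidableEq F]
    (hq : 5 ≤ Fintype.card F)
    (hcov : covRad (↑(PRS F (Fintype.card F - 3)) : Set (Option F → F)) = 3) :
    Set.ncard {y : Projectivization F (Fin 4 → F) |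
        ∀ t₁ t₂ : Option F,
          y.rep ∉ Submodule.span F ({PRScol F 4 t₁, PRScol F 4 t₂} : Set (Fin 4 → F))} =
      (Fintype.card F ^ 3 + 2 * Fintype.card F ^ 2 + Fintype.card F) / 2 :=
  stmt18' hq
end
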